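/- arXiv:2007.14345 — 6 statements merged into one kernel-verified Lean document; each statement's English description precedes it below -/
import Mathlib

section
/- Let (A;E) be an exact category and let J1 and J2 be ideals of A. If an object B of A has a special J1-preenvelope m1: B → C1 and a special J2-preenvelope m2: B → C2 (both of which are inflations), then the pushout morphism m1 ⨿_B m2 : B → C1 ⨿_B C2 is a special (J1 ∩ J2)-preenvelope of B. In particular, if J1 and J2 are special preenveloping ideals of (A;E), then so is the intersection J1 ∩ J2. -/
open CategoryTheory CategoryTheory.Limits

universe w v u

namespace IdealApprox

/-- The data of an exact structure: a class of composable pairs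
(the "conflations" `B ⟶ C ⟶ X`). -/
structure ExactStructureData (A : Type u) [Category.{v} A] [Preadditive A] :
    Type (max u v) where
  conf : ∀ ⦃B C X : A⦄, (B ⟶ C) → (C ⟶ X) → Prop

/-- An ideal of an additive category: an additive subbifunctor of `Hom`. -/
structure Ideal (A : Type u) [Category.{v} A] [Preadditive A] : Type (max u v) where
  mem : ∀ ⦃X Y : A⦄, (X ⟶ Y) → Prop
  zero_mem : ∀ X Y : A, mem (0 : X ⟶ Y)
  add_mem : ∀ ⦃X Y : A⦄ ⦃f g : X ⟶ Y⦄, mem f → mem g → mem (f + g)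
  neg_mem : ∀ ⦃X Y : A⦄ ⦃f : X ⟶ Y⦄, mem f → mem (-f)
  comp_mem : ∀ ⦃W X Y Z : A⦄ (h : W ⟶ X) ⦃g : X ⟶ Y⦄ (k : Y ⟶ Z), mem g → mem (h ≫ g ≫ k)

/-- A class of morphisms of a category. -/
abbrev MorClass (A : Type u) [Category.{v} A] : Type (max u v) :=
  ∀ ⦃X Y : A⦄, (X ⟶ Y) → Prop

variable {A : Type u} [Category.{v} A] [Preadditive A]

/-- `(i, p)` is a kernel-cokernel pair. -/
structure IsKernelCokernelPair {B C X : A} (i : B ⟶ C) (p : C ⟶ X) : Prop where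
  w : i ≫ p = 0
  isKernel : Nonempty (IsLimit (KernelFork.ofι i w))
  isCokernel : Nonempty (IsColimit (CokernelCofork.ofπ p w))

/-- The maximal candidate exact structure: all kernel-cokernel pairs.  On an abelian
category (such as a module category) this is the standard exact (abelian) structure. -/
def maxExact (A : Type u) [Category.{v} A] [Preadditive A] : ExactStructureData A :=
  ⟨fun _ _ _ i p => IsKernelCokernelPair i p⟩

/-- `m` is an inflation: it occurs as the first map of a conflation. -/
def ExactStructureData.IsInflation (E : ExactStructureData A) {B C : A} (m : B ⟶ C) : Prop :=
  ∃ (X : A) (p : C ⟶ X), E.conf m p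

/-- `p` is a deflation: it occurs as the second map of a conflation. -/
def ExactStructureData.IsDeflation (E : ExactStructureData A) {C X : A} (p : C ⟶ X) : Prop :=
  ∃ (B : A) (i : B ⟶ C), E.conf i p

/-- The axioms of a Quillen exact category `(A; E)`. -/
structure ExactStructureData.IsExact (E : ExactStructureData A) : Prop where
  ker_coker : ∀ ⦃B C X : A⦄ ⦃i : B ⟶ C⦄ ⦃p : C ⟶ X⦄, E.conf i p → IsKernelCokernelPair i p
  iso_closed : ∀ ⦃B C X B' C' X' : A⦄ ⦃i : B ⟶ C⦄ ⦃p : C ⟶ X⦄ ⦃i' : B' ⟶ C'⦄ ⦃p' : C' ⟶ X'⦄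
      (eB : B ≅ B') (eC : C ≅ C') (eX : X ≅ X'),
      i ≫ eC.hom = eB.hom ≫ i' → p ≫ eX.hom = eC.hom ≫ p' → E.conf i p → E.conf i' p'
  id_inflation : ∀ X : A, E.IsInflation (𝟙 X)
  id_deflation : ∀ X : A, E.IsDeflation (𝟙 X)
  comp_inflation : ∀ ⦃X Y Z : A⦄ ⦃f : X ⟶ Y⦄ ⦃g : Y ⟶ Z⦄,
      E.IsInflation f → E.IsInflation g → E.IsInflation (f ≫ g)
  comp_deflation : ∀ ⦃X Y Z : A⦄ ⦃f : X ⟶ Y⦄ ⦃g : Y ⟶ Z⦄,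
      E.IsDeflation f → E.IsDeflation g → E.IsDeflation (f ≫ g)
  pushout_inflation : ∀ ⦃X Y Z : A⦄ (m : X ⟶ Y) (f : X ⟶ Z), E.IsInflation m →
      ∃ (W : A) (g : Y ⟶ W) (m' : Z ⟶ W), IsPushout m f g m' ∧ E.IsInflation m'
  pullback_deflation : ∀ ⦃X Y Z : A⦄ (p : Y ⟶ X) (f : Z ⟶ X), E.IsDeflation p →
      ∃ (W : A) (g : W ⟶ Y) (p' : W ⟶ Z), IsPullback g p' p f ∧ E.IsDeflation p'

/-- `Ext(a,b) = 0`: the composite `Ext(A1,B0) ⟶ Ext(A0,B1)` (pullback along `a`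
followed by pushout along `b`) vanishes.  Elementwise: for every conflation
`B0 ⟶ C ⟶ A1` and every pushout of it along `b` (a conflation `B1 ⟶ C' ⟶ A1`),
the morphism `a` lifts along the deflation `C' ⟶ A1`, i.e. the pullback along `a`
of the pushout along `b` splits. -/
def ExtZero (E : ExactStructureData A) {A0 A1 B0 B1 : A} (a : A0 ⟶ A1) (b : B0 ⟶ B1) : Prop :=
  ∀ ⦃C : A⦄ (i : B0 ⟶ C) (p : C ⟶ A1), E.conf i p →
    ∀ ⦃C' : A⦄ (c : C ⟶ C') (i' : B1 ⟶ C') (p' : C' ⟶ A1),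
      IsPushout i b c i' → c ≫ p' = p → i' ≫ p' = 0 →
      ∃ s : A0 ⟶ C', s ≫ p' = a

/-- The class of morphisms left `Ext`-orthogonal to every member of `M`. -/
def leftPerp (E : ExactStructureData A) (M : MorClass A) : MorClass A :=
  fun _ _ a => ∀ ⦃B0 B1 : A⦄ (b : B0 ⟶ B1), M b → ExtZero E a b

/-- The class of morphisms right `Ext`-orthogonal to every member of `M`. -/
def rightPerp (E : ExactStructureData A) (M : MorClass A) : MorClass A :=
  fun _ _ b => ∀ ⦃A0 A1 : A⦄ (a : A0 ⟶ A1), M a → ExtZero E a b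

/-- Intersection of two classes of morphisms. -/
def interClass (M N : MorClass A) : MorClass A := fun _ _ f => M f ∧ N f

/-- Intersection of a set-indexed family of classes of morphisms. -/
def interFamily {ι : Type w} (J : ι → MorClass A) : MorClass A := fun _ _ f => ∀ i, J i f

/-- `j : B ⟶ C0` is a special `J`-preenvelope of `B`: it belongs to `J` and appears as the
inflation of a conflation admitting a morphism of conflations (identity on `B`) whose
right-hand component lies in `⊥J`. -/
def IsSpecialPreenvelope (E : ExactStructureData A) (J : MorClass A) {B C0 : A}
    (j : B ⟶ C0) : Prop :=
  J j ∧ ∃ (A0 A1 C1 : A) (p0 : C0 ⟶ A0) (j' : B ⟶ C1) (p1 : C1 ⟶ A1)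
      (c : C0 ⟶ C1) (a : A0 ⟶ A1),
    E.conf j p0 ∧ E.conf j' p1 ∧ j ≫ c = j' ∧ p0 ≫ a = c ≫ p1 ∧ leftPerp E J a

/-- `J` is a special preenveloping ideal (class). -/
def SpecialPreenveloping (E : ExactStructureData A) (J : MorClass A) : Prop :=
  ∀ B : A, ∃ (C0 : A) (j : B ⟶ C0), IsSpecialPreenvelope E J j

/-- `e : D1 ⟶ B` is a special `I`-precover of `B`. -/
def IsSpecialPrecover (E : ExactStructureData A) (I : MorClass A) {D1 B : A}
    (e : D1 ⟶ B) : Prop :=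
  I e ∧ ∃ (K0 K1 D0 : A) (i0 : K0 ⟶ D0) (p0 : D0 ⟶ B) (i1 : K1 ⟶ D1)
      (k : K0 ⟶ K1) (d : D0 ⟶ D1),
    E.conf i0 p0 ∧ E.conf i1 e ∧ i0 ≫ d = k ≫ i1 ∧ d ≫ e = p0 ∧ rightPerp E I k

/-- `I` is a special precovering ideal (class). -/
def SpecialPrecovering (E : ExactStructureData A) (I : MorClass A) : Prop :=
  ∀ B : A, ∃ (D1 : A) (e : D1 ⟶ B), IsSpecialPrecover E I e

/-- The ideal of projective morphisms: morphisms left `Ext`-orthogonal to all morphisms. -/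
def projClass (E : ExactStructureData A) : MorClass A :=
  fun _ _ p => ∀ ⦃B0 B1 : A⦄ (b : B0 ⟶ B1), ExtZero E p b

/-- The ideal of injective morphisms: morphisms right `Ext`-orthogonal to all morphisms. -/
def injClass (E : ExactStructureData A) : MorClass A :=
  fun _ _ j => ∀ ⦃A0 A1 : A⦄ (a : A0 ⟶ A1), ExtZero E a j

/-- Every object is the codomain of a projective morphism. -/
def HasEnoughProjectiveMorphisms (E : ExactStructureData A) : Prop :=
  ∀ X : A, ∃ (P : A) (p : P ⟶ X), projClass E p

/-- Every object is the domain of an injective morphism. -/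
def HasEnoughInjectiveMorphisms (E : ExactStructureData A) : Prop :=
  ∀ X : A, ∃ (Y : A) (j : X ⟶ Y), injClass E j

/-- `(I, J)` is an ideal cotorsion pair: `I = ⊥J` and `J = I⊥`. -/
def IsIdealCotorsionPair (E : ExactStructureData A) (I J : MorClass A) : Prop :=
  (∀ ⦃X Y : A⦄ (f : X ⟶ Y), I f ↔ leftPerp E J f) ∧
  (∀ ⦃X Y : A⦄ (f : X ⟶ Y), J f ↔ rightPerp E I f)

/-- A complete ideal cotorsion pair: `I` is special precovering and `J` is special
preenveloping. -/
def IsCompleteIdealCotorsionPair (E : ExactStructureData A) (I J : MorClass A) : Prop :=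
  IsIdealCotorsionPair E I J ∧ SpecialPrecovering E I ∧ SpecialPreenveloping E J

/-- `c = b ⋆ a` is an ME (mono-epi) extension of the arrow `a` by the arrow `b`. -/
def IsMEExtension (E : ExactStructureData A) {B0 B1 A0 A1 C0 C1 : A}
    (b : B0 ⟶ B1) (a : A0 ⟶ A1) (c : C0 ⟶ C1) : Prop :=
  ∃ (i0 : B0 ⟶ C0) (p0 : C0 ⟶ A0) (i1 : B1 ⟶ C1) (p1 : C1 ⟶ A1)
    (Cm : A) (im : B0 ⟶ Cm) (pm : Cm ⟶ A1) (c1 : C0 ⟶ Cm) (c2 : Cm ⟶ C1),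
    E.conf i0 p0 ∧ E.conf i1 p1 ∧ E.conf im pm ∧ c = c1 ≫ c2 ∧
    i0 ≫ c1 = im ∧ c1 ≫ pm = p0 ≫ a ∧ im ≫ c2 = b ≫ i1 ∧ c2 ≫ p1 = pm

/-- `I ⋄ K` : the class of all ME-extensions `i ⋆ k` with `i ∈ I`, `k ∈ K`. -/
def diamond (E : ExactStructureData A) (I K : MorClass A) : MorClass A :=
  fun _ _ c => ∃ (B0 B1 A0 A1 : A) (b : B0 ⟶ B1) (a : A0 ⟶ A1),
    I b ∧ K a ∧ IsMEExtension E b a c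

/-- `j` is a `J`-preenvelope (left approximation). -/
def IsPreenvelope (J : MorClass A) {B C : A} (j : B ⟶ C) : Prop :=
  J j ∧ ∀ ⦃C' : A⦄ (j' : B ⟶ C'), J j' → ∃ f : C ⟶ C', j ≫ f = j'

/-- `J` is a preenveloping ideal (class). -/
def Preenveloping (J : MorClass A) : Prop :=
  ∀ B : A, ∃ (C : A) (j : B ⟶ C), IsPreenvelope J j

/-- `e` is an `I`-precover (right approximation). -/
def IsPrecover (I : MorClass A) {D B : A} (e : D ⟶ B) : Prop :=
  I e ∧ ∀ ⦃D' : A⦄ (e' : D' ⟶ B), I e' → ∃ f : D' ⟶ D, f ≫ e = e'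

/-- `I` is a precovering ideal (class). -/
def Precovering (I : MorClass A) : Prop :=
  ∀ B : A, ∃ (D : A) (e : D ⟶ B), IsPrecover I e

/-- `J` is monic preenveloping: every object admits a preenvelope which is an inflation. -/
def MonicPreenveloping (E : ExactStructureData A) (J : MorClass A) : Prop :=
  ∀ B : A, ∃ (C : A) (j : B ⟶ C), E.IsInflation j ∧ IsPreenvelope J j

/-- `I` is epic precovering: every object admits a precover which is a deflation. -/
def EpicPrecovering (E : ExactStructureData A) (I : MorClass A) : Prop :=
  ∀ B : A, ∃ (D : A) (e : D ⟶ B), E.IsDeflation e ∧ IsPrecover I e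

/-- A conflation of arrows `b ⟶ c ⟶ a` in `(Arr(A); Arr(E))`, encoded componentwise:
two conflations `(i0, p0)`, `(i1, p1)` together with the commutativity of the two squares. -/
def IsArrowConf (E : ExactStructureData A) {B0 B1 C0 C1 A0 A1 : A}
    (b : B0 ⟶ B1) (c : C0 ⟶ C1) (a : A0 ⟶ A1)
    (i0 : B0 ⟶ C0) (p0 : C0 ⟶ A0) (i1 : B1 ⟶ C1) (p1 : C1 ⟶ A1) : Prop :=
  E.conf i0 p0 ∧ E.conf i1 p1 ∧ i0 ≫ c = b ≫ i1 ∧ p0 ≫ a = c ≫ p1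

/-- An ME (mono-epi) conflation of arrows, encoded componentwise. -/
def IsMEArrowConf (E : ExactStructureData A) {B0 B1 C0 C1 A0 A1 : A}
    (b : B0 ⟶ B1) (c : C0 ⟶ C1) (a : A0 ⟶ A1)
    (i0 : B0 ⟶ C0) (p0 : C0 ⟶ A0) (i1 : B1 ⟶ C1) (p1 : C1 ⟶ A1) : Prop :=
  IsArrowConf E b c a i0 p0 i1 p1 ∧
  ∃ (Cm : A) (im : B0 ⟶ Cm) (pm : Cm ⟶ A1) (c1 : C0 ⟶ Cm) (c2 : Cm ⟶ C1),
    E.conf im pm ∧ c = c1 ≫ c2 ∧ i0 ≫ c1 = im ∧ c1 ≫ pm = p0 ≫ a ∧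
    im ≫ c2 = b ≫ i1 ∧ c2 ≫ p1 = pm

/-- Equivalence (isomorphism fixing the two end arrows) of conflations of arrows. -/
def ArrowConfEquiv {B0 B1 C0 C1 D0 D1 A0 A1 : A}
    (c : C0 ⟶ C1) (i0 : B0 ⟶ C0) (p0 : C0 ⟶ A0) (i1 : B1 ⟶ C1) (p1 : C1 ⟶ A1)
    (d : D0 ⟶ D1) (j0 : B0 ⟶ D0) (q0 : D0 ⟶ A0) (j1 : B1 ⟶ D1) (q1 : D1 ⟶ A1) : Prop :=
  ∃ (e0 : C0 ≅ D0) (e1 : C1 ≅ D1),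
    c ≫ e1.hom = e0.hom ≫ d ∧ i0 ≫ e0.hom = j0 ∧ e0.hom ≫ q0 = p0 ∧
    i1 ≫ e1.hom = j1 ∧ e1.hom ≫ q1 = p1

/-- `(A; E)` has exact coproducts: coproducts exist and a coproduct of conflations is a
conflation. -/
def HasExactCoproducts [HasCoproducts.{w} A] (E : ExactStructureData A) : Prop :=
  ∀ (ι : Type w) (B C X : ι → A) (i : ∀ j, B j ⟶ C j) (p : ∀ j, C j ⟶ X j),
    (∀ j, E.conf (i j) (p j)) → E.conf (Limits.Sigma.map i) (Limits.Sigma.map p)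

/-- `(A; E)` has exact products: products exist and a product of conflations is a
conflation. -/
def HasExactProducts [HasProducts.{w} A] (E : ExactStructureData A) : Prop :=
  ∀ (ι : Type w) (B C X : ι → A) (i : ∀ j, B j ⟶ C j) (p : ∀ j, C j ⟶ X j),
    (∀ j, E.conf (i j) (p j)) → E.conf (Limits.Pi.map i) (Limits.Pi.map p)

/-- The ideal generated by a set-indexed family of morphisms: finite sums of
composites through the generators. -/
def genIdeal {ι : Type w} {X0 X1 : ι → A} (m : ∀ i, X0 i ⟶ X1 i) : MorClass A :=
  fun X Y f => ∃ (n : ℕ) (j : Fin n → ι) (g : ∀ k : Fin n, X ⟶ X0 (j k))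
    (h : ∀ k : Fin n, X1 (j k) ⟶ Y),
    f = ∑ k : Fin n, g k ≫ m (j k) ≫ h k

/-- The sum of a set-indexed family of ideals: finite sums of members. -/
def idealFamilySum {ι : Type w} (I : ι → Ideal A) : MorClass A :=
  fun X Y f => ∃ (n : ℕ) (j : Fin n → ι) (g : Fin n → (X ⟶ Y)),
    (∀ k, (I (j k)).mem (g k)) ∧ f = ∑ k : Fin n, g k

/-- Containment of ideals. -/
def Ideal.le (I J : Ideal A) : Prop := ∀ ⦃X Y : A⦄ ⦃f : X ⟶ Y⦄, I.mem f → J.mem f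

/-- Intersection of two ideals. -/
def Ideal.inf (I J : Ideal A) : Ideal A where
  mem := fun _ _ f => I.mem f ∧ J.mem f
  zero_mem := fun X Y => ⟨I.zero_mem X Y, J.zero_mem X Y⟩
  add_mem := fun _ _ _ _ hf hg => ⟨I.add_mem hf.1 hg.1, J.add_mem hf.2 hg.2⟩
  neg_mem := fun _ _ _ hf => ⟨I.neg_mem hf.1, J.neg_mem hf.2⟩
  comp_mem := fun _ _ _ _ h _ k hg => ⟨I.comp_mem h k hg.1, J.comp_mem h k hg.2⟩

/-- Sum of two ideals. -/
def Ideal.sum (I J : Ideal A) : Ideal A where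
  mem := fun _ _ f => ∃ g h, I.mem g ∧ J.mem h ∧ f = g + h
  zero_mem := fun X Y => ⟨0, 0, I.zero_mem X Y, J.zero_mem X Y, by simp⟩
  add_mem := by
    rintro X Y f g ⟨f1, f2, hf1, hf2, rfl⟩ ⟨g1, g2, hg1, hg2, rfl⟩
    exact ⟨f1 + g1, f2 + g2, I.add_mem hf1 hg1, J.add_mem hf2 hg2, by abel⟩
  neg_mem := by
    rintro X Y f ⟨f1, f2, h1, h2, rfl⟩
    exact ⟨-f1, -f2, I.neg_mem h1, J.neg_mem h2, by abel⟩
  comp_mem := by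
    rintro W X Y Z h g k ⟨g1, g2, h1, h2, rfl⟩
    exact ⟨h ≫ g1 ≫ k, h ≫ g2 ≫ k, I.comp_mem h k h1, J.comp_mem h k h2, by
      simp [Preadditive.add_comp, Preadditive.comp_add]⟩

/-- An ideal closed under set-indexed coproducts of morphisms. -/
def ClosedUnderCoproducts [HasCoproducts.{w} A] (I : Ideal A) : Prop :=
  ∀ ⦃ι : Type w⦄ ⦃X0 X1 : ι → A⦄ (f : ∀ i, X0 i ⟶ X1 i),
    (∀ i, I.mem (f i)) → I.mem (Limits.Sigma.map f)

/-- An ideal closed under ME-extensions by projective morphisms. -/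
def ClosedUnderProjME (E : ExactStructureData A) (I : Ideal A) : Prop :=
  ∀ ⦃P0 P1 K0 K1 C0 C1 : A⦄ (p : P0 ⟶ P1) (k : K0 ⟶ K1) (c : C0 ⟶ C1),
    projClass E p → I.mem k → IsMEExtension E p k c → I.mem c

/-- `Ext_{Arr(A)}(a, b)` is a set: there is a set-indexed family of conflations of arrows
`b ⟶ c^ζ ⟶ a` representing every conflation of arrows from `b` to `a` up to equivalence. -/
def ExtArrowSmall (E : ExactStructureData A) {A0 A1 B0 B1 : A}
    (a : A0 ⟶ A1) (b : B0 ⟶ B1) : Prop :=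
  ∃ (ι : Type w) (C0 C1 : ι → A) (c : ∀ z, C0 z ⟶ C1 z)
    (i0 : ∀ z, B0 ⟶ C0 z) (p0 : ∀ z, C0 z ⟶ A0) (i1 : ∀ z, B1 ⟶ C1 z) (p1 : ∀ z, C1 z ⟶ A1),
    (∀ z, IsArrowConf E b (c z) a (i0 z) (p0 z) (i1 z) (p1 z)) ∧
    ∀ ⦃D0 D1 : A⦄ (d : D0 ⟶ D1) (j0 : B0 ⟶ D0) (q0 : D0 ⟶ A0) (j1 : B1 ⟶ D1) (q1 : D1 ⟶ A1),
      IsArrowConf E b d a j0 q0 j1 q1 →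
      ∃ z, ArrowConfEquiv (c z) (i0 z) (p0 z) (i1 z) (p1 z) d j0 q0 j1 q1

/-- `Ext(X, B)` is a set: there is a set-indexed family of conflations `B ⟶ C^z ⟶ X`
representing every conflation from `B` to `X` up to equivalence. -/
def ExtObjSmall (E : ExactStructureData A) (X B : A) : Prop :=
  ∃ (ι : Type w) (C : ι → A) (m : ∀ z, B ⟶ C z) (p : ∀ z, C z ⟶ X),
    (∀ z, E.conf (m z) (p z)) ∧
    ∀ ⦃D : A⦄ (m' : B ⟶ D) (p' : D ⟶ X), E.conf m' p' →
      ∃ z, ∃ e : C z ≅ D, m z ≫ e.hom = m' ∧ e.hom ≫ p' = p z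

/-- `Add X`: direct summands of coproducts of copies of `X`. -/
def AddClosure [HasCoproducts.{w} A] (X : A) : A → Prop := fun M =>
  ∃ (ι : Type w) (s : M ⟶ ∐ (fun _ : ι => X)) (r : (∐ fun _ : ι => X) ⟶ M), s ≫ r = 𝟙 M

/-- The object ideal of morphisms factoring through an object of `S`. -/
def objIdeal (S : A → Prop) : MorClass A := fun X Y f =>
  ∃ (M : A) (g : X ⟶ M) (h : M ⟶ Y), S M ∧ f = g ≫ h


section Statement0Proof


/-- An inflation composed with an isomorphism is an inflation. -/
lemma isInflation_comp_iso {E : ExactStructureData A} (hE : E.IsExact) {X Y Z : A} {f : X ⟶ Y}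
    (hf : E.IsInflation f) (e : Y ≅ Z) : E.IsInflation (f ≫ e.hom) := by
  obtain ⟨Q, p, hp⟩ := hf
  refine ⟨Q, e.inv ≫ p, hE.iso_closed (Iso.refl X) e (Iso.refl Q) (by simp) (by simp) hp⟩

/-- Both legs of a pushout of an inflation along an arbitrary morphism: the leg opposite
to the inflation is an inflation. -/
lemma isInflation_of_isPushout {E : ExactStructureData A} (hE : E.IsExact)
    {X Y Z P : A} {m : X ⟶ Y} {f : X ⟶ Z} {u : Y ⟶ P} {v : Z ⟶ P}
    (hPO : IsPushout m f u v) (hm : E.IsInflation m) : E.IsInflation v := by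
  obtain ⟨W, g, m', sq, hinf⟩ := hE.pushout_inflation m f hm
  have h : m' ≫ (sq.isoIsPushout _ _ hPO).hom = v := sq.inr_isoIsPushout_hom _ _ hPO
  rw [← h]
  exact isInflation_comp_iso hE hinf _

/-- The pullback of a conflation along an arbitrary morphism is a conflation with the
same kernel object. -/
lemma conf_pullback {E : ExactStructureData A} (hE : E.IsExact)
    {K C A2 A1 : A} {i : K ⟶ C} {p : C ⟶ A2} (hc : E.conf i p) (g : A1 ⟶ A2) :
    ∃ (W : A) (gW : W ⟶ C) (pW : W ⟶ A1) (iW : K ⟶ W),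
      IsPullback gW pW p g ∧ E.conf iW pW ∧ iW ≫ gW = i ∧ iW ≫ pW = 0 := by
  obtain ⟨wip, hker, hcoker⟩ := hE.ker_coker hc
  obtain ⟨W, gW, pW, hpb, hdefl⟩ := hE.pullback_deflation p g ⟨K, i, hc⟩
  obtain ⟨Bt, it, hct⟩ := hdefl
  have hkerlim := hker.some
  -- the induced map from K to the pullback
  have hi0 : i ≫ p = (0 : K ⟶ A1) ≫ g := by simp [wip]
  set iW : K ⟶ W := hpb.lift i 0 hi0 with hiWdef
  have hiWg : iW ≫ gW = i := hpb.lift_fst i 0 hi0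
  have hiWp : iW ≫ pW = 0 := hpb.lift_snd i 0 hi0
  have hmono_i : Mono i := by
    constructor
    intro T α β h
    exact Fork.IsLimit.hom_ext hkerlim (by simpa using h)
  have hmono_iW : Mono iW := by
    have : Mono (iW ≫ gW) := by rw [hiWg]; exact hmono_i
    exact mono_of_mono iW gW
  -- `iW` is a kernel of `pW`
  have hWlim : IsLimit (KernelFork.ofι iW hiWp) := by
    refine KernelFork.IsLimit.ofι' iW hiWp (fun {T} k hk => ?_)
    have hkg : (k ≫ gW) ≫ p = 0 := by
      rw [Category.assoc, hpb.w, ← Category.assoc, hk, Limits.zero_comp]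
    obtain ⟨l, hl⟩ := KernelFork.IsLimit.lift' hkerlim (k ≫ gW) hkg
    have hl' : l ≫ i = k ≫ gW := hl
    refine ⟨l, hpb.hom_ext ?_ ?_⟩
    · rw [Category.assoc, hiWg, hl']
    · rw [Category.assoc, hiWp, Limits.comp_zero, hk]
  -- transport the conflation along the isomorphism of kernels
  obtain ⟨wt, hkert, _⟩ := hE.ker_coker hct
  have hkertlim := hkert.some
  refine ⟨W, gW, pW, iW, hpb,
    hE.iso_closed (hkertlim.conePointUniqueUpToIso hWlim) (Iso.refl W) (Iso.refl A1)
      ?_ (by simp) hct, hiWg, hiWp⟩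
  simpa using
    (IsLimit.conePointUniqueUpToIso_hom_comp hkertlim hWlim
      Limits.WalkingParallelPair.zero).symm

/-- Precomposition stability of `Ext`-orthogonality. -/
lemma extZero_precomp {E : ExactStructureData A} {A0' A0 A1 K0 K1 : A}
    (f : A0' ⟶ A0) {a : A0 ⟶ A1} {b : K0 ⟶ K1} (h : ExtZero E a b) :
    ExtZero E (f ≫ a) b := by
  intro C i p hc C' c i' p' hpo hcp hip
  obtain ⟨s, hs⟩ := h i p hc c i' p' hpo hcp hip
  exact ⟨f ≫ s, by rw [Category.assoc, hs]⟩

/-- Addition stability of `Ext`-orthogonality. -/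
lemma extZero_add {E : ExactStructureData A} {A0 A1 K0 K1 : A}
    {a a' : A0 ⟶ A1} {b : K0 ⟶ K1} (h : ExtZero E a b) (h' : ExtZero E a' b) :
    ExtZero E (a + a') b := by
  intro C i p hc C' c i' p' hpo hcp hip
  obtain ⟨s, hs⟩ := h i p hc c i' p' hpo hcp hip
  obtain ⟨s', hs'⟩ := h' i p hc c i' p' hpo hcp hip
  exact ⟨s + s', by rw [Preadditive.add_comp, hs, hs']⟩

/-- Postcomposition stability of `Ext`-orthogonality. -/
lemma extZero_postcomp {E : ExactStructureData A} (hE : E.IsExact) {A0 A1 A2 K0 K1 : A}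
    {a : A0 ⟶ A1} (g : A1 ⟶ A2) {b : K0 ⟶ K1} (h : ExtZero E a b) :
    ExtZero E (a ≫ g) b := by
  intro C i p hc C' c i' p' hpo hcp hip
  -- pull the conflation back along `g`
  obtain ⟨W, gW, pW, iW, hpb, hcW, hiWg, hiWp⟩ := conf_pullback hE hc g
  -- push out `iW` along `b`
  obtain ⟨W', cW, iW', hpoW, _⟩ := hE.pushout_inflation iW b ⟨A1, pW, hcW⟩
  have hW0 : iW ≫ pW = b ≫ (0 : K1 ⟶ A1) := by simp [hiWp]
  set pW' : W' ⟶ A1 := hpoW.desc pW 0 hW0 with hpW'def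
  have h1 : cW ≫ pW' = pW := hpoW.inl_desc pW 0 hW0
  have h2 : iW' ≫ pW' = 0 := hpoW.inr_desc pW 0 hW0
  obtain ⟨s0, hs0⟩ := h iW pW hcW cW iW' pW' hpoW h1 h2
  -- map the auxiliary pushout into `C'`
  have hWc : iW ≫ gW ≫ c = b ≫ i' := by rw [← Category.assoc, hiWg, hpo.w]
  set φ : W' ⟶ C' := hpoW.desc (gW ≫ c) i' hWc with hφdef
  have hφ1 : cW ≫ φ = gW ≫ c := hpoW.inl_desc _ _ hWc
  have hφ2 : iW' ≫ φ = i' := hpoW.inr_desc _ _ hWc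
  have hφp : φ ≫ p' = pW' ≫ g := by
    apply hpoW.hom_ext
    · rw [← Category.assoc, hφ1, Category.assoc, hcp, hpb.w, ← Category.assoc, h1]
    · rw [← Category.assoc, hφ2, hip, ← Category.assoc, h2, Limits.zero_comp]
  exact ⟨s0 ≫ φ, by rw [Category.assoc, hφp, ← Category.assoc, hs0]⟩

/-- The key construction: the pushout of two special preenvelopes is a special
preenvelope for the intersection ideal. -/
lemma special_pushout {E : ExactStructureData A} (hE : E.IsExact) (J1 J2 : Ideal A)
    {B C1 C2 P : A} (m1 : B ⟶ C1) (m2 : B ⟶ C2) (u1 : C1 ⟶ P) (u2 : C2 ⟶ P)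
    (h1 : IsSpecialPreenvelope E J1.mem m1) (h2 : IsSpecialPreenvelope E J2.mem m2)
    (hPO : IsPushout m1 m2 u1 u2) :
    IsSpecialPreenvelope E (J1.inf J2).mem (m1 ≫ u1) := by
  obtain ⟨hm1J, A0, A1, C1', p0, n1, p1, c1, a1, hconf1, hconf1', hc1, hcomm1, ha1⟩ := h1
  obtain ⟨hm2J, D0, D1, C2', q0, n2, q1, c2, a2, hconf2, hconf2', hc2, hcomm2, ha2⟩ := h2
  -- membership in the intersection ideal
  have hmem : (J1.inf J2).mem (m1 ≫ u1) := by
    constructor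
    · simpa using J1.comp_mem (𝟙 B) u1 hm1J
    · rw [hPO.w]; simpa using J2.comp_mem (𝟙 B) u2 hm2J
  -- inflation structure
  have im1 : E.IsInflation m1 := ⟨A0, p0, hconf1⟩
  have im2 : E.IsInflation m2 := ⟨D0, q0, hconf2⟩
  have in1 : E.IsInflation n1 := ⟨A1, p1, hconf1'⟩
  have in2 : E.IsInflation n2 := ⟨D1, q1, hconf2'⟩
  have hu2 : E.IsInflation u2 := isInflation_of_isPushout hE hPO im1
  have hm : E.IsInflation (m1 ≫ u1) := by
    rw [hPO.w]; exact hE.comp_inflation im2 hu2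
  obtain ⟨X, p, hconfm⟩ := hm
  -- pushout of the two second conflations
  obtain ⟨P', v1, v2, hPO', hv2⟩ := hE.pushout_inflation n1 n2 in1
  have hn : E.IsInflation (n1 ≫ v1) := by
    rw [hPO'.w]; exact hE.comp_inflation in2 hv2
  obtain ⟨X', p', hconfn⟩ := hn
  -- cokernel data
  obtain ⟨wm, _, hcokm⟩ := hE.ker_coker hconfm
  obtain ⟨wn, _, _⟩ := hE.ker_coker hconfn
  obtain ⟨w1, _, hcok1⟩ := hE.ker_coker hconf1
  obtain ⟨w2, _, hcok2⟩ := hE.ker_coker hconf2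
  obtain ⟨w1', _, hcok1'⟩ := hE.ker_coker hconf1'
  obtain ⟨w2', _, hcok2'⟩ := hE.ker_coker hconf2'
  have hcm := hcokm.some
  have hc1' := hcok1'.some
  have hc2' := hcok2'.some
  -- the comparison map on the middle objects
  have hcPw : m1 ≫ c1 ≫ v1 = m2 ≫ c2 ≫ v2 := by
    rw [← Category.assoc, hc1, ← Category.assoc, hc2, hPO'.w]
  set cP : P ⟶ P' := hPO.desc (c1 ≫ v1) (c2 ≫ v2) hcPw with hcPdef
  have hcP1 : u1 ≫ cP = c1 ≫ v1 := hPO.inl_desc _ _ hcPw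
  have hcP2 : u2 ≫ cP = c2 ≫ v2 := hPO.inr_desc _ _ hcPw
  have hmcP : (m1 ≫ u1) ≫ cP = n1 ≫ v1 := by
    rw [Category.assoc, hcP1, ← Category.assoc, hc1]
  -- the induced map on cokernels
  have haw : (m1 ≫ u1) ≫ cP ≫ p' = 0 := by
    rw [← Category.assoc, hmcP, wn]
  obtain ⟨a, hpa⟩ := CokernelCofork.IsColimit.desc' hcm (cP ≫ p') haw
  -- component maps out of `X`
  have hπbw : m1 ≫ p0 = m2 ≫ (0 : C2 ⟶ A0) := by simp [w1]
  set πb : P ⟶ A0 := hPO.desc p0 0 hπbw with hπbdef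
  have hπb1 : u1 ≫ πb = p0 := hPO.inl_desc _ _ hπbw
  have hπb2 : u2 ≫ πb = 0 := hPO.inr_desc _ _ hπbw
  have hπtw : m1 ≫ (0 : C1 ⟶ D0) = m2 ≫ q0 := by simp [w2]
  set πt : P ⟶ D0 := hPO.desc 0 q0 hπtw with hπtdef
  have hπt1 : u1 ≫ πt = 0 := hPO.inl_desc _ _ hπtw
  have hπt2 : u2 ≫ πt = q0 := hPO.inr_desc _ _ hπtw
  obtain ⟨πXA, hπXA⟩ := CokernelCofork.IsColimit.desc' hcm πb
    (by rw [Category.assoc, hπb1, w1])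
  obtain ⟨πXD, hπXD⟩ := CokernelCofork.IsColimit.desc' hcm πt
    (by rw [Category.assoc, hπt1, Limits.comp_zero])
  -- component maps into `X'`
  obtain ⟨ιA1, hιA1⟩ := CokernelCofork.IsColimit.desc' hc1' (v1 ≫ p')
    (by rw [← Category.assoc, wn])
  obtain ⟨ιD1, hιD1⟩ := CokernelCofork.IsColimit.desc' hc2' (v2 ≫ p')
    (by rw [← Category.assoc, ← hPO'.w, wn])
  -- decompose `a` as a sum of maps factoring through `a1` and `a2`
  have hXA : p ≫ πXA = πb := hπXA
  have hXD : p ≫ πXD = πt := hπXD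
  have hA1 : p1 ≫ ιA1 = v1 ≫ p' := hιA1
  have hD1 : q1 ≫ ιD1 = v2 ≫ p' := hιD1
  have hpa' : p ≫ a = cP ≫ p' := hpa
  have hPlevel : cP ≫ p' = πb ≫ a1 ≫ ιA1 + πt ≫ a2 ≫ ιD1 := by
    apply hPO.hom_ext
    · rw [← Category.assoc, hcP1, Category.assoc, ← hA1, ← Category.assoc, ← hcomm1]
      simp only [Preadditive.comp_add, ← Category.assoc, hπb1, hπt1, Limits.zero_comp,
        add_zero]
    · rw [← Category.assoc, hcP2, Category.assoc, ← hD1, ← Category.assoc, ← hcomm2]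
      simp only [Preadditive.comp_add, ← Category.assoc, hπb2, hπt2, Limits.zero_comp,
        zero_add]
  have ha_eq : a = πXA ≫ a1 ≫ ιA1 + πXD ≫ a2 ≫ ιD1 := by
    apply Cofork.IsColimit.hom_ext hcm
    show p ≫ a = p ≫ (πXA ≫ a1 ≫ ιA1 + πXD ≫ a2 ≫ ιD1)
    rw [hpa', hPlevel]
    simp only [Preadditive.comp_add, ← Category.assoc, hXA, hXD]
  -- the right-hand arrow is left `Ext`-orthogonal to the intersection ideal
  have hperp : leftPerp E (J1.inf J2).mem a := by
    intro K0 K1 b hb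
    rw [ha_eq]
    refine extZero_add
      (extZero_precomp πXA (extZero_postcomp hE ιA1 (ha1 b hb.1)))
      (extZero_precomp πXD (extZero_postcomp hE ιD1 (ha2 b hb.2)))
  exact ⟨hmem, X, X', P', p, n1 ≫ v1, p', cP, a, hconfm, hconfn, hmcP, hpa', hperp⟩

end Statement0Proof

/-- Theorem: finite intersection of special preenveloping ideals.
If `m1 : B ⟶ C1` is a special `J1`-preenvelope and `m2 : B ⟶ C2` is a special
`J2`-preenvelope, then the pushout morphism `m1 ⨿_B m2 : B ⟶ C1 ⨿_B C2` is a special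
`(J1 ∩ J2)`-preenvelope of `B`.  In particular, if `J1` and `J2` are special
preenveloping ideals, then so is `J1 ∩ J2`. -/
theorem statement0 (E : ExactStructureData A) (hE : E.IsExact) (J1 J2 : Ideal A) :
    (∀ ⦃B C1 C2 P : A⦄ (m1 : B ⟶ C1) (m2 : B ⟶ C2) (q1 : C1 ⟶ P) (q2 : C2 ⟶ P),
        IsSpecialPreenvelope E J1.mem m1 → IsSpecialPreenvelope E J2.mem m2 →
        IsPushout m1 m2 q1 q2 →
        IsSpecialPreenvelope E (J1.inf J2).mem (m1 ≫ q1)) ∧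
    (SpecialPreenveloping E J1.mem → SpecialPreenveloping E J2.mem →
        SpecialPreenveloping E (J1.inf J2).mem) := by
  constructor
  · intro B C1 C2 P m1 m2 q1 q2 h1 h2 hPO
    exact special_pushout hE J1 J2 m1 m2 q1 q2 h1 h2 hPO
  · intro hJ1 hJ2 B
    obtain ⟨C1, m1, h1⟩ := hJ1 B
    obtain ⟨C2, m2, h2⟩ := hJ2 B
    have h1' := h1
    obtain ⟨_, A0, A1, C1', p0, n1, p1, c1, a1, hconf1, _⟩ := h1'
    obtain ⟨P, u1, u2, hPO, _⟩ := hE.pushout_inflation m1 m2 ⟨A0, p0, hconf1⟩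
    exact ⟨P, m1 ≫ u1, special_pushout hE J1 J2 m1 m2 u1 u2 h1 h2 hPO⟩

end IdealApprox
end

section
/- Let (A;E) be an exact category and let I1 and I2 be special precovering ideals of A. Then the intersection I1 ∩ I2 is a special precovering ideal; explicitly, if e1: D1 → B is a special I1-precover of an object B and e2: D2 → B is a special I2-precover of B (both deflations), then the pullback morphism D1 ×_B D2 → B is a special (I1 ∩ I2)-precover of B. -/
open CategoryTheory CategoryTheory.Limits

universe w v u

namespace IdealApprox

variable {A : Type u} [Category.{v} A] [Preadditive A]

section AuxLemmas

variable {E : ExactStructureData A}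

lemma confW (hE : E.IsExact) {B C X : A} {i : B ⟶ C} {p : C ⟶ X} (h : E.conf i p) :
    i ≫ p = 0 := (hE.ker_coker h).w

lemma kLift (hE : E.IsExact) {B C X : A} {i : B ⟶ C} {p : C ⟶ X} (h : E.conf i p)
    {T : A} (f : T ⟶ C) (hf : f ≫ p = 0) : ∃ l : T ⟶ B, l ≫ i = f := by
  obtain ⟨hl⟩ := (hE.ker_coker h).isKernel
  obtain ⟨l, hl'⟩ := KernelFork.IsLimit.lift' hl f hf
  exact ⟨l, by simpa using hl'⟩

lemma kHomExt (hE : E.IsExact) {B C X : A} {i : B ⟶ C} {p : C ⟶ X} (h : E.conf i p)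
    {T : A} {x y : T ⟶ B} (hxy : x ≫ i = y ≫ i) : x = y := by
  obtain ⟨hl⟩ := (hE.ker_coker h).isKernel
  exact Fork.IsLimit.hom_ext hl (by simpa using hxy)

lemma cDesc (hE : E.IsExact) {B C X : A} {i : B ⟶ C} {p : C ⟶ X} (h : E.conf i p)
    {T : A} (f : C ⟶ T) (hf : i ≫ f = 0) : ∃ dsc : X ⟶ T, p ≫ dsc = f := by
  obtain ⟨hc⟩ := (hE.ker_coker h).isCokernel
  obtain ⟨dsc, hd⟩ := CokernelCofork.IsColimit.desc' hc f hf
  exact ⟨dsc, by simpa using hd⟩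

lemma cHomExt (hE : E.IsExact) {B C X : A} {i : B ⟶ C} {p : C ⟶ X} (h : E.conf i p)
    {T : A} {x y : X ⟶ T} (hxy : p ≫ x = p ≫ y) : x = y := by
  obtain ⟨hc⟩ := (hE.ker_coker h).isCokernel
  exact Cofork.IsColimit.hom_ext hc (by simpa using hxy)

/-- If `(i, q)` is a conflation and `p` has the universal property of a cokernel of `i`,
then `(i, p)` is a conflation. -/
lemma conf_of_coker (hE : E.IsExact) {B C Y A1 : A} {i : B ⟶ C} {q : C ⟶ Y} (h : E.conf i q)
    (p : C ⟶ A1) (hip : i ≫ p = 0)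
    (hdesc : ∀ ⦃T : A⦄ (t : C ⟶ T), i ≫ t = 0 → ∃ θ : A1 ⟶ T, p ≫ θ = t)
    (hepi : ∀ ⦃T : A⦄ (x y : A1 ⟶ T), p ≫ x = p ≫ y → x = y) : E.conf i p := by
  obtain ⟨h1, hq1⟩ := cDesc hE h p hip
  obtain ⟨h2, hq2⟩ := hdesc q (confW hE h)
  refine hE.iso_closed (Iso.refl B) (Iso.refl C) ⟨h1, h2, ?_, ?_⟩ (by simp) ?_ h
  · apply cHomExt hE h
    rw [← Category.assoc, hq1, hq2, Category.comp_id]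
  · apply hepi
    rw [← Category.assoc, hq2, hq1, Category.comp_id]
  · simpa using hq1

lemma inflation_of_po (hE : E.IsExact) {X Y Z W : A} {m : X ⟶ Y} {f : X ⟶ Z} {g : Y ⟶ W}
    {m' : Z ⟶ W} (hm : E.IsInflation m) (hpo : IsPushout m f g m') : E.IsInflation m' := by
  obtain ⟨W₀, g₀, m₀', hpo₀, X₀, q₀, hc₀⟩ := hE.pushout_inflation m f hm
  refine ⟨X₀, (hpo₀.isoIsPushout _ _ hpo).inv ≫ q₀,
    hE.iso_closed (Iso.refl Z) (hpo₀.isoIsPushout _ _ hpo) (Iso.refl X₀) ?_ (by simp) hc₀⟩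
  simp only [Iso.refl_hom, Category.id_comp]; exact hpo₀.inr_isoIsPushout_hom _ _ hpo

lemma deflation_of_pb (hE : E.IsExact) {X Y Z W : A} {p : Y ⟶ X} {f : Z ⟶ X} {g : W ⟶ Y}
    {p' : W ⟶ Z} (hp : E.IsDeflation p) (hpb : IsPullback g p' p f) : E.IsDeflation p' := by
  obtain ⟨W₀, g₀, p₀', hpb₀, B₀, i₀, hc₀⟩ := hE.pullback_deflation p f hp
  refine ⟨B₀, i₀ ≫ (hpb.isoIsPullback _ _ hpb₀).inv,
    hE.iso_closed (Iso.refl B₀) (hpb.isoIsPullback _ _ hpb₀).symm (Iso.refl Z) (by simp) ?_ hc₀⟩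
  rw [Iso.refl_hom, Category.comp_id, Iso.symm_hom, Iso.eq_inv_comp]
  exact hpb.isoIsPullback_hom_snd _ _ hpb₀

/-- Pushout of a conflation along an arbitrary morphism. -/
lemma conf_pushout (hE : E.IsExact) {N C A1 : A} {i : N ⟶ C} {p : C ⟶ A1} (h : E.conf i p)
    {N' : A} (f : N ⟶ N') :
    ∃ (C₁ : A) (c : C ⟶ C₁) (i₁ : N' ⟶ C₁) (p₁ : C₁ ⟶ A1),
      IsPushout i f c i₁ ∧ E.conf i₁ p₁ ∧ c ≫ p₁ = p ∧ i₁ ≫ p₁ = 0 := by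
  obtain ⟨W, g, m', hpo, hinf⟩ := hE.pushout_inflation i f ⟨A1, p, h⟩
  have hw : i ≫ p = f ≫ (0 : N' ⟶ A1) := by rw [confW hE h, comp_zero]
  have hgp₁ : g ≫ hpo.desc p 0 hw = p := hpo.inl_desc p 0 hw
  have hmp₁ : m' ≫ hpo.desc p 0 hw = 0 := hpo.inr_desc p 0 hw
  refine ⟨W, g, m', hpo.desc p 0 hw, hpo, ?_, hgp₁, hmp₁⟩
  obtain ⟨X₀, q, hcq⟩ := hinf
  refine conf_of_coker hE hcq _ hmp₁ ?_ ?_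
  · intro T t ht
    have hit : i ≫ g ≫ t = 0 := by
      rw [← Category.assoc, hpo.w, Category.assoc, ht, comp_zero]
    obtain ⟨θ, hθ⟩ := cDesc hE h (g ≫ t) hit
    refine ⟨θ, hpo.hom_ext ?_ ?_⟩
    · rw [← Category.assoc, hgp₁, hθ]
    · rw [← Category.assoc, hmp₁, zero_comp, ht]
  · intro T x y hxy
    apply cHomExt hE h
    rw [← hgp₁, Category.assoc, Category.assoc, hxy]

lemma zeroish (hE : E.IsExact) (X : A) :
    ∃ (Z : A) (pX : X ⟶ Z), E.conf (𝟙 X) pX ∧ (∀ ⦃T : A⦄ (f g : T ⟶ Z), f = g) ∧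
      (∀ ⦃T : A⦄ (f g : Z ⟶ T), f = g) := by
  obtain ⟨Z, pX, h⟩ := hE.id_inflation X
  have hout : ∀ ⦃T : A⦄ (x y : Z ⟶ T), x = y := by
    intro T x y
    apply cHomExt hE h
    have hp0 : pX = 0 := by simpa using confW hE h
    rw [hp0, zero_comp, zero_comp]
  have hid : (𝟙 Z) = (0 : Z ⟶ Z) := hout _ _
  refine ⟨Z, pX, h, ?_, hout⟩
  intro T f g
  have hf : ∀ f' : T ⟶ Z, f' = 0 := fun f' => by
    rw [← Category.comp_id f', hid, comp_zero]
  rw [hf f, hf g]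

/-- Split kernel-cokernel pairs are conflations. -/
lemma split_conf (hE : E.IsExact) {X W Y : A} (u : X ⟶ W) (σ : W ⟶ Y) (v : Y ⟶ W) (τ : W ⟶ X)
    (huτ : u ≫ τ = 𝟙 X) (hvσ : v ≫ σ = 𝟙 Y) (huσ : u ≫ σ = 0) (hvτ : v ≫ τ = 0)
    (hid : τ ≫ u + σ ≫ v = 𝟙 W) : E.conf u σ := by
  obtain ⟨Z, pX, hcX, hZin, hZout⟩ := zeroish hE X
  obtain ⟨Z', pY, hcY, hZ'in, hZ'out⟩ := zeroish hE Y
  have e : Z' ≅ Z := ⟨(0 : Z' ⟶ Z), (0 : Z ⟶ Z'), hZ'in _ _, hZout _ _⟩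
  have hq : E.conf (𝟙 Y) (pY ≫ e.hom) :=
    hE.iso_closed (Iso.refl Y) (Iso.refl Y) e (by simp) (by simp) hcY
  obtain ⟨W', g, p'', hpb', hdef⟩ := hE.pullback_deflation pX (pY ≫ e.hom) ⟨X, 𝟙 X, hcX⟩
  obtain ⟨K, i'', hc''⟩ := hdef
  have hτσ : τ ≫ pX = σ ≫ (pY ≫ e.hom) := hZin _ _
  have hφ1 : hpb'.lift τ σ hτσ ≫ g = τ := hpb'.lift_fst τ σ hτσ
  have hφ2 : hpb'.lift τ σ hτσ ≫ p'' = σ := hpb'.lift_snd τ σ hτσ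
  set φh := hpb'.lift τ σ hτσ with hφh
  set φi : W' ⟶ W := g ≫ u + p'' ≫ v with hφi
  have hφiτ : φi ≫ τ = g := by
    rw [hφi, Preadditive.add_comp, Category.assoc, Category.assoc, huτ, hvτ, comp_zero,
      add_zero, Category.comp_id]
  have hφiσ : φi ≫ σ = p'' := by
    rw [hφi, Preadditive.add_comp, Category.assoc, Category.assoc, huσ, hvσ, comp_zero,
      zero_add, Category.comp_id]
  have h1 : φh ≫ φi = 𝟙 W := by
    rw [hφi, Preadditive.comp_add, ← Category.assoc, ← Category.assoc, hφ1, hφ2, hid]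
  have h2 : φi ≫ φh = 𝟙 W' := by
    apply hpb'.hom_ext
    · rw [Category.assoc, hφ1, Category.id_comp, hφiτ]
    · rw [Category.assoc, hφ2, Category.id_comp, hφiσ]
  have hup'' : (u ≫ φh) ≫ p'' = 0 := by rw [Category.assoc, hφ2, huσ]
  obtain ⟨ψ, hψ⟩ := kLift hE hc'' (u ≫ φh) hup''
  have hχu : (i'' ≫ φi ≫ τ) ≫ u = i'' ≫ φi := by
    have hτu : τ ≫ u = 𝟙 W - σ ≫ v := by rw [← hid]; abel
    simp only [Category.assoc]
    rw [hτu, Preadditive.comp_sub, Preadditive.comp_sub, Category.comp_id,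
      ← Category.assoc φi σ, hφiσ, ← Category.assoc, confW hE hc'', zero_comp, sub_zero]
  have hψχ : ψ ≫ (i'' ≫ φi ≫ τ) = 𝟙 X := by
    rw [← Category.assoc, hψ, Category.assoc, ← Category.assoc φh φi τ, h1,
      Category.id_comp, huτ]
  have hχψ : (i'' ≫ φi ≫ τ) ≫ ψ = 𝟙 K := by
    apply kHomExt hE hc''
    rw [Category.assoc, hψ, Category.id_comp, ← Category.assoc, hχu, Category.assoc, h2,
      Category.comp_id]
  refine hE.iso_closed ⟨i'' ≫ φi ≫ τ, ψ, hχψ, hψχ⟩ ⟨φi, φh, h2, h1⟩ (Iso.refl Y) ?_ ?_ hc''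
  · exact hχu.symm
  · rw [Iso.refl_hom, Category.comp_id]; exact hφiσ.symm

end AuxLemmas

/-- finite intersection of special precovering ideals.
If `e1 : D1 ⟶ B` is a special `I1`-precover and `e2 : D2 ⟶ B` is a special
`I2`-precover, then the pullback morphism `D1 ×_B D2 ⟶ B` is a special
`(I1 ∩ I2)`-precover of `B`; in particular the intersection of two special
precovering ideals is special precovering. -/
theorem statement1 (E : ExactStructureData A) (hE : E.IsExact) (I1 I2 : Ideal A) :
    (∀ ⦃B D1 D2 P : A⦄ (e1 : D1 ⟶ B) (e2 : D2 ⟶ B) (q1 : P ⟶ D1) (q2 : P ⟶ D2),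
        IsSpecialPrecover E I1.mem e1 → IsSpecialPrecover E I2.mem e2 →
        IsPullback q1 q2 e1 e2 →
        IsSpecialPrecover E (I1.inf I2).mem (q1 ≫ e1)) ∧
    (SpecialPrecovering E I1.mem → SpecialPrecovering E I2.mem →
        SpecialPrecovering E (I1.inf I2).mem) := by
  have main : ∀ ⦃B D1 D2 P : A⦄ (e1 : D1 ⟶ B) (e2 : D2 ⟶ B) (q1 : P ⟶ D1) (q2 : P ⟶ D2),
      IsSpecialPrecover E I1.mem e1 → IsSpecialPrecover E I2.mem e2 →
      IsPullback q1 q2 e1 e2 → IsSpecialPrecover E (I1.inf I2).mem (q1 ≫ e1) := by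
    intro B D1 D2 P e1 e2 q1 q2 hs1 hs2 hpb
    obtain ⟨he1, K0, K1, D0, i0, p0, i1, k, d, hc00, hc1, hsq1, hde1, hk⟩ := hs1
    obtain ⟨he2, L0, L2, E0, j0, r0, j2, l, d', hc00', hc2, hsq2, hde2, hl⟩ := hs2
    -- membership of the pullback map in the intersection ideal
    have hmem : (I1.inf I2).mem (q1 ≫ e1) := by
      constructor
      · have := I1.comp_mem q1 (𝟙 B) he1
        simpa using this
      · have := I2.comp_mem q2 (𝟙 B) he2
        rw [hpb.w]
        simpa using this
    -- the pullback Q of the two "upper" deflations p0, r0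
    obtain ⟨Q, π1, π2, hpbQ, hdefπ2⟩ := hE.pullback_deflation p0 r0 ⟨K0, i0, hc00⟩
    have hdefpt : E.IsDeflation (π1 ≫ p0) := by
      rw [hpbQ.w]
      exact hE.comp_deflation hdefπ2 ⟨L0, j0, hc00'⟩
    obtain ⟨N0, iN, hcN⟩ := hdefpt
    -- the map q1 ≫ e1 is a deflation
    have hdefq2 : E.IsDeflation q2 := deflation_of_pb hE ⟨K1, i1, hc1⟩ hpb
    have hdefe : E.IsDeflation (q1 ≫ e1) := by
      rw [hpb.w]
      exact hE.comp_deflation hdefq2 ⟨L2, j2, hc2⟩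
    obtain ⟨M0, iM, hcM⟩ := hdefe
    -- the induced map dt : Q ⟶ P
    have hdcomm : (π1 ≫ d) ≫ e1 = (π2 ≫ d') ≫ e2 := by
      rw [Category.assoc, hde1, Category.assoc, hde2, hpbQ.w]
    have hdtq1 : hpb.lift (π1 ≫ d) (π2 ≫ d') hdcomm ≫ q1 = π1 ≫ d := hpb.lift_fst _ _ _
    have hdtq2 : hpb.lift (π1 ≫ d) (π2 ≫ d') hdcomm ≫ q2 = π2 ≫ d' := hpb.lift_snd _ _ _
    set dt := hpb.lift (π1 ≫ d) (π2 ≫ d') hdcomm with hdtdef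
    have hdte : dt ≫ q1 ≫ e1 = π1 ≫ p0 := by
      rw [← Category.assoc, hdtq1, Category.assoc, hde1]
    -- the induced map kt : N0 ⟶ M0 on kernels
    have hiNdte : (iN ≫ dt) ≫ (q1 ≫ e1) = 0 := by
      rw [Category.assoc, hdte, confW hE hcN]
    obtain ⟨kt, hkt⟩ := kLift hE hcM (iN ≫ dt) hiNdte
    -- split structure on M0 = ker (q1 ≫ e1) ≅ K1 ⊕ L2
    have ht1w : i1 ≫ e1 = (0 : K1 ⟶ D2) ≫ e2 := by rw [confW hE hc1, zero_comp]
    have ht1q1 : hpb.lift i1 0 ht1w ≫ q1 = i1 := hpb.lift_fst _ _ _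
    have ht1q2 : hpb.lift i1 0 ht1w ≫ q2 = 0 := hpb.lift_snd _ _ _
    set t1 := hpb.lift i1 0 ht1w with ht1def
    have ht2w : (0 : L2 ⟶ D1) ≫ e1 = j2 ≫ e2 := by rw [confW hE hc2, zero_comp]
    have ht2q1 : hpb.lift 0 j2 ht2w ≫ q1 = 0 := hpb.lift_fst _ _ _
    have ht2q2 : hpb.lift 0 j2 ht2w ≫ q2 = j2 := hpb.lift_snd _ _ _
    set t2 := hpb.lift 0 j2 ht2w with ht2def
    have hu1w : t1 ≫ (q1 ≫ e1) = 0 := by rw [← Category.assoc, ht1q1, confW hE hc1]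
    obtain ⟨u1, hu1⟩ := kLift hE hcM t1 hu1w
    have hu2w : t2 ≫ (q1 ≫ e1) = 0 := by rw [← Category.assoc, ht2q1, zero_comp]
    obtain ⟨u2, hu2⟩ := kLift hE hcM t2 hu2w
    have hσKw : (iM ≫ q1) ≫ e1 = 0 := by rw [Category.assoc, confW hE hcM]
    obtain ⟨σK, hσK⟩ := kLift hE hc1 (iM ≫ q1) hσKw
    have hσLw : (iM ≫ q2) ≫ e2 = 0 := by rw [Category.assoc, ← hpb.w, confW hE hcM]
    obtain ⟨σL, hσL⟩ := kLift hE hc2 (iM ≫ q2) hσLw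
    have hu1σK : u1 ≫ σK = 𝟙 K1 := by
      apply kHomExt hE hc1
      rw [Category.assoc, hσK, ← Category.assoc, hu1, ht1q1, Category.id_comp]
    have hu1σL : u1 ≫ σL = 0 := by
      apply kHomExt hE hc2
      rw [Category.assoc, hσL, ← Category.assoc, hu1, ht1q2, zero_comp]
    have hu2σK : u2 ≫ σK = 0 := by
      apply kHomExt hE hc1
      rw [Category.assoc, hσK, ← Category.assoc, hu2, ht2q1, zero_comp]
    have hu2σL : u2 ≫ σL = 𝟙 L2 := by
      apply kHomExt hE hc2
      rw [Category.assoc, hσL, ← Category.assoc, hu2, ht2q2, Category.id_comp]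
    have hidM : σK ≫ u1 + σL ≫ u2 = 𝟙 M0 := by
      apply kHomExt hE hcM
      apply hpb.hom_ext
      · simp only [Preadditive.add_comp, Category.assoc, Category.id_comp]
        rw [reassoc_of% hu1, reassoc_of% hu2, ht1q1, ht2q1, comp_zero, add_zero, hσK]
      · simp only [Preadditive.add_comp, Category.assoc, Category.id_comp]
        rw [reassoc_of% hu1, reassoc_of% hu2, ht1q2, ht2q2, comp_zero, zero_add, hσL]
    have hcu1 : E.conf u1 σL := split_conf hE u1 σL u2 σK hu1σK hu2σL hu1σL hu2σK hidM
    -- projections of N0 = ker (π1 ≫ p0) onto K0 and L0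
    have hρKw : (iN ≫ π1) ≫ p0 = 0 := by rw [Category.assoc, confW hE hcN]
    obtain ⟨ρK, hρK⟩ := kLift hE hc00 (iN ≫ π1) hρKw
    have hρLw : (iN ≫ π2) ≫ r0 = 0 := by rw [Category.assoc, ← hpbQ.w, confW hE hcN]
    obtain ⟨ρL, hρL⟩ := kLift hE hc00' (iN ≫ π2) hρLw
    -- components of kt
    have hktσK : kt ≫ σK = ρK ≫ k := by
      apply kHomExt hE hc1
      calc (kt ≫ σK) ≫ i1 = kt ≫ iM ≫ q1 := by rw [Category.assoc, hσK]
        _ = (iN ≫ dt) ≫ q1 := by rw [← Category.assoc, hkt]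
        _ = iN ≫ π1 ≫ d := by rw [Category.assoc, hdtq1]
        _ = (ρK ≫ i0) ≫ d := by rw [← Category.assoc, hρK]
        _ = (ρK ≫ k) ≫ i1 := by rw [Category.assoc, hsq1, ← Category.assoc]
    have hktσL : kt ≫ σL = ρL ≫ l := by
      apply kHomExt hE hc2
      calc (kt ≫ σL) ≫ j2 = kt ≫ iM ≫ q2 := by rw [Category.assoc, hσL]
        _ = (iN ≫ dt) ≫ q2 := by rw [← Category.assoc, hkt]
        _ = iN ≫ π2 ≫ d' := by rw [Category.assoc, hdtq2]
        _ = (ρL ≫ j0) ≫ d' := by rw [← Category.assoc, hρL]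
        _ = (ρL ≫ l) ≫ j2 := by rw [Category.assoc, hsq2, ← Category.assoc]
    -- the kernel map kt is right Ext-orthogonal to I1 ∩ I2
    have hperp : rightPerp E (I1.inf I2).mem kt := by
      intro A0 A1 a ha C i p hcip C' c i' p' hPO hcp hip0
      obtain ⟨ha1, ha2⟩ := ha
      -- push out the conflation (i, p) along ρK, then along k
      obtain ⟨CK, cK0, iK, pK, hpoK0, hcK, hcK0, hiKpK⟩ := conf_pushout hE hcip ρK
      obtain ⟨Dk, cK1, iK', pk, hpoK1, hcK', hcK1, hiK'0⟩ := conf_pushout hE hcK k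
      obtain ⟨CL, cL0, iL, pL, hpoL0, hcL, hcL0, hiLpL⟩ := conf_pushout hE hcip ρL
      obtain ⟨Dl, cL1, iL', pl, hpoL1, hcL', hcL1, hiL'0⟩ := conf_pushout hE hcL l
      -- partial lifts of a coming from k ⊥ I1 and l ⊥ I2
      obtain ⟨sk, hsk⟩ := hk a ha1 iK pK hcK cK1 iK' pk hpoK1 hcK1 hiK'0
      obtain ⟨sl, hsl⟩ := hl a ha2 iL pL hcL cL1 iL' pl hpoL1 hcL1 hiL'0
      -- the comparison maps πk : C' ⟶ Dk and πl : C' ⟶ Dl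
      have hπkw : i ≫ (cK0 ≫ cK1) = kt ≫ (σK ≫ iK') := by
        calc i ≫ cK0 ≫ cK1 = (ρK ≫ iK) ≫ cK1 := by rw [← Category.assoc, hpoK0.w]
          _ = ρK ≫ k ≫ iK' := by rw [Category.assoc, hpoK1.w]
          _ = (kt ≫ σK) ≫ iK' := by rw [← Category.assoc, hktσK]
          _ = kt ≫ σK ≫ iK' := by rw [Category.assoc]
      have hcπk : c ≫ hPO.desc (cK0 ≫ cK1) (σK ≫ iK') hπkw = cK0 ≫ cK1 := hPO.inl_desc _ _ _
      have hiπk : i' ≫ hPO.desc (cK0 ≫ cK1) (σK ≫ iK') hπkw = σK ≫ iK' := hPO.inr_desc _ _ _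
      set πk := hPO.desc (cK0 ≫ cK1) (σK ≫ iK') hπkw with hπkdef
      have hπkpk : πk ≫ pk = p' := by
        apply hPO.hom_ext
        · rw [← Category.assoc, hcπk, Category.assoc, hcK1, hcK0, hcp]
        · rw [← Category.assoc, hiπk, Category.assoc, hiK'0, comp_zero, hip0]
      have hπlw : i ≫ (cL0 ≫ cL1) = kt ≫ (σL ≫ iL') := by
        calc i ≫ cL0 ≫ cL1 = (ρL ≫ iL) ≫ cL1 := by rw [← Category.assoc, hpoL0.w]
          _ = ρL ≫ l ≫ iL' := by rw [Category.assoc, hpoL1.w]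
          _ = (kt ≫ σL) ≫ iL' := by rw [← Category.assoc, hktσL]
          _ = kt ≫ σL ≫ iL' := by rw [Category.assoc]
      have hcπl : c ≫ hPO.desc (cL0 ≫ cL1) (σL ≫ iL') hπlw = cL0 ≫ cL1 := hPO.inl_desc _ _ _
      have hiπl : i' ≫ hPO.desc (cL0 ≫ cL1) (σL ≫ iL') hπlw = σL ≫ iL' := hPO.inr_desc _ _ _
      set πl := hPO.desc (cL0 ≫ cL1) (σL ≫ iL') hπlw with hπldef
      have hπlpl : πl ≫ pl = p' := by
        apply hPO.hom_ext
        · rw [← Category.assoc, hcπl, Category.assoc, hcL1, hcL0, hcp]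
        · rw [← Category.assoc, hiπl, Category.assoc, hiL'0, comp_zero, hip0]
      -- the bottom square (i', σL, πl, iL') is a pushout
      have hbig : IsPushout i (kt ≫ σL) (c ≫ πl) iL' := by
        rw [hktσL, hcπl]
        exact hpoL0.paste_vert hpoL1
      have hbot : IsPushout i' σL πl iL' := IsPushout.of_top hbig hiπl hPO
      -- the conflation K1 ⟶ C' ⟶ Dl
      have hκinf : E.IsInflation (u1 ≫ i') :=
        hE.comp_inflation ⟨L2, σL, hcu1⟩ (inflation_of_po hE ⟨A1, p, hcip⟩ hPO)
      obtain ⟨Wκ, wκ, hcκ⟩ := hκinf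
      have hκπl : (u1 ≫ i') ≫ πl = 0 := by
        rw [Category.assoc, hiπl, ← Category.assoc, hu1σL, zero_comp]
      have hcκπl : E.conf (u1 ≫ i') πl := by
        refine conf_of_coker hE hcκ πl hκπl ?_ ?_
        · intro T t ht
          have h0 : u1 ≫ i' ≫ t = 0 := by rw [← Category.assoc]; exact ht
          have hcomm : i' ≫ t = σL ≫ (u2 ≫ i' ≫ t) := by
            have hexp : (σK ≫ u1 + σL ≫ u2) ≫ (i' ≫ t) = i' ≫ t := by
              rw [hidM, Category.id_comp]
            calc i' ≫ t = (σK ≫ u1 + σL ≫ u2) ≫ (i' ≫ t) := hexp.symm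
              _ = σK ≫ (u1 ≫ i' ≫ t) + σL ≫ (u2 ≫ i' ≫ t) := by
                  rw [Preadditive.add_comp, Category.assoc, Category.assoc]
              _ = σL ≫ (u2 ≫ i' ≫ t) := by rw [h0, comp_zero, zero_add]
          exact ⟨hbot.desc t (u2 ≫ i' ≫ t) hcomm, hbot.inl_desc _ _ _⟩
        · intro T x y hxy
          apply hbot.hom_ext hxy
          have h1 : σL ≫ iL' ≫ x = σL ≫ iL' ≫ y := by
            rw [← Category.assoc, ← hiπl, Category.assoc, hxy, ← Category.assoc, hiπl,
              Category.assoc]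
          calc iL' ≫ x = (u2 ≫ σL) ≫ (iL' ≫ x) := by rw [hu2σL, Category.id_comp]
            _ = u2 ≫ σL ≫ iL' ≫ y := by rw [Category.assoc, h1]
            _ = (u2 ≫ σL) ≫ (iL' ≫ y) := by rw [Category.assoc]
            _ = iL' ≫ y := by rw [hu2σL, Category.id_comp]
      -- pull the deflation πl back along sl and chase
      obtain ⟨V, α, β, hpbV, hdefβ⟩ := hE.pullback_deflation πl sl ⟨K1, u1 ≫ i', hcκπl⟩
      obtain ⟨K', ι0, hcι0⟩ := hdefβ
      have hι1w : (u1 ≫ i') ≫ πl = (0 : K1 ⟶ A0) ≫ sl := by rw [hκπl, zero_comp]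
      have hι1α : hpbV.lift (u1 ≫ i') 0 hι1w ≫ α = u1 ≫ i' := hpbV.lift_fst _ _ _
      have hι1β : hpbV.lift (u1 ≫ i') 0 hι1w ≫ β = 0 := hpbV.lift_snd _ _ _
      set ι1 := hpbV.lift (u1 ≫ i') 0 hι1w with hι1def
      have hψw : (ι0 ≫ α) ≫ πl = 0 := by
        rw [Category.assoc, hpbV.w, ← Category.assoc, confW hE hcι0, zero_comp]
      obtain ⟨ψ, hψ⟩ := kLift hE hcκπl (ι0 ≫ α) hψw
      have hι0 : ι0 = ψ ≫ ι1 := by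
        apply hpbV.hom_ext
        · rw [Category.assoc, hι1α, hψ]
        · rw [Category.assoc, hι1β, comp_zero, confW hE hcι0]
      have hαp' : α ≫ p' = β ≫ a := by
        calc α ≫ p' = α ≫ πl ≫ pl := by rw [hπlpl]
          _ = (β ≫ sl) ≫ pl := by rw [← Category.assoc, hpbV.w]
          _ = β ≫ a := by rw [Category.assoc, hsl]
      have hhw : (α ≫ πk - β ≫ sk) ≫ pk = 0 := by
        rw [Preadditive.sub_comp, Category.assoc, Category.assoc, hπkpk, hsk, hαp', sub_self]
      obtain ⟨h', hh'⟩ := kLift hE hcK' (α ≫ πk - β ≫ sk) hhw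
      have hκπk : (u1 ≫ i') ≫ πk = iK' := by
        rw [Category.assoc, hiπk, ← Category.assoc, hu1σK, Category.id_comp]
      have hι1h' : ι1 ≫ h' = 𝟙 K1 := by
        apply kHomExt hE hcK'
        rw [Category.assoc, hh', Category.id_comp, Preadditive.comp_sub, ← Category.assoc,
          ← Category.assoc, hι1α, hι1β, zero_comp, sub_zero, Category.assoc, hiπk,
          ← Category.assoc, hu1σK, Category.id_comp]
      have hι0cc : ι0 ≫ (α - h' ≫ (u1 ≫ i')) = 0 := by
        rw [Preadditive.comp_sub, hι0]
        rw [Category.assoc, Category.assoc, hι1α, ← Category.assoc ι1 h', hι1h',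
          Category.id_comp, sub_self]
      obtain ⟨s, hs⟩ := cDesc hE hcι0 (α - h' ≫ (u1 ≫ i')) hι0cc
      refine ⟨s, ?_⟩
      apply cHomExt hE hcι0
      have hκp' : (u1 ≫ i') ≫ p' = 0 := by rw [Category.assoc, hip0, comp_zero]
      rw [← Category.assoc, hs, Preadditive.sub_comp, Category.assoc, hκp', comp_zero,
        sub_zero, hαp']
    exact ⟨hmem, N0, M0, Q, iN, π1 ≫ p0, iM, kt, dt, hcN, hcM, hkt.symm,
      (by rw [← Category.assoc, hdtq1, Category.assoc, hde1]), hperp⟩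
  refine ⟨main, ?_⟩
  intro h1 h2 B
  obtain ⟨D1, e1, hs1⟩ := h1 B
  obtain ⟨D2, e2, hs2⟩ := h2 B
  have hdefe1 : E.IsDeflation e1 := by
    obtain ⟨K0, K1, D0, i0, p0, i1, k, d, hc00, hc1, -, -, -⟩ := hs1.2
    exact ⟨K1, i1, hc1⟩
  obtain ⟨P, q1, q2, hpb, -⟩ := hE.pullback_deflation e1 e2 hdefe1
  exact ⟨P, q1 ≫ e1, main e1 e2 q1 q2 hs1 hs2 hpb⟩

end IdealApprox
end

section
/- Let A be an additive category and let J1 and J2 be preenveloping ideals of A. Then J1 + J2 is a preenveloping ideal; explicitly, if j1: B → J1 is a J1-preenvelope of B and j2: B → J2 is a J2-preenvelope of B, then the morphism (j1; j2): B → J1 ⊕ J2 with components j1 and j2 is a (J1 + J2)-preenvelope of B. Dually, a sum of two precovering ideals is precovering. -/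
open CategoryTheory CategoryTheory.Limits

universe w v u

namespace IdealApprox

variable {A : Type u} [Category.{v} A] [Preadditive A]

variable [HasBinaryBiproducts A]

/-- Proposition: sums of preenveloping ideals.  If `j1` is a
`J1`-preenvelope of `B` and `j2` is a `J2`-preenvelope of `B`, then
`(j1; j2) : B ⟶ J1 ⊕ J2` is a `(J1 + J2)`-preenvelope of `B`; hence the sum of two
preenveloping ideals is preenveloping.  Dually, a sum of two precovering ideals is
precovering. -/
theorem statement3 (J1 J2 : Ideal A) :
    (∀ ⦃B C1 C2 : A⦄ (j1 : B ⟶ C1) (j2 : B ⟶ C2),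
        IsPreenvelope J1.mem j1 → IsPreenvelope J2.mem j2 →
        IsPreenvelope (J1.sum J2).mem (biprod.lift j1 j2)) ∧
    (Preenveloping J1.mem → Preenveloping J2.mem → Preenveloping (J1.sum J2).mem) ∧
    (∀ I1 I2 : Ideal A, Precovering I1.mem → Precovering I2.mem →
        Precovering (I1.sum I2).mem) := by
  constructor
  · rintro B C1 C2 j1 j2 ⟨hj1, h1⟩ ⟨hj2, h2⟩
    constructor
    · refine ⟨j1 ≫ biprod.inl, j2 ≫ biprod.inr, ?_, ?_, by ext <;> simp⟩
      · simpa using J1.comp_mem (𝟙 B) (biprod.inl : C1 ⟶ C1 ⊞ C2) hj1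
      · simpa using J2.comp_mem (𝟙 B) (biprod.inr : C2 ⟶ C1 ⊞ C2) hj2
    · rintro C' j' ⟨g, h, hg, hh, rfl⟩
      obtain ⟨f1, hf1⟩ := h1 g hg
      obtain ⟨f2, hf2⟩ := h2 h hh
      exact ⟨biprod.fst ≫ f1 + biprod.snd ≫ f2, by
        simp [Preadditive.comp_add, hf1, hf2]⟩
  refine ⟨fun hp1 hp2 B => ?_, fun I1 I2 hp1 hp2 B => ?_⟩
  · obtain ⟨C1, j1, hj1⟩ := hp1 B
    obtain ⟨C2, j2, hj2⟩ := hp2 B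
    refine ⟨C1 ⊞ C2, biprod.lift j1 j2, ?_, ?_⟩
    · refine ⟨j1 ≫ biprod.inl, j2 ≫ biprod.inr, ?_, ?_, by ext <;> simp⟩
      · simpa using J1.comp_mem (𝟙 B) (biprod.inl : C1 ⟶ C1 ⊞ C2) hj1.1
      · simpa using J2.comp_mem (𝟙 B) (biprod.inr : C2 ⟶ C1 ⊞ C2) hj2.1
    · rintro C' j' ⟨g, h, hg, hh, rfl⟩
      obtain ⟨f1, hf1⟩ := hj1.2 g hg
      obtain ⟨f2, hf2⟩ := hj2.2 h hh
      exact ⟨biprod.fst ≫ f1 + biprod.snd ≫ f2, by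
        simp [Preadditive.comp_add, hf1, hf2]⟩
  · obtain ⟨D1, e1, he1⟩ := hp1 B
    obtain ⟨D2, e2, he2⟩ := hp2 B
    refine ⟨D1 ⊞ D2, biprod.desc e1 e2, ?_, ?_⟩
    · refine ⟨biprod.fst ≫ e1, biprod.snd ≫ e2, ?_, ?_, by ext <;> simp⟩
      · simpa using I1.comp_mem (biprod.fst : D1 ⊞ D2 ⟶ D1) (𝟙 B) he1.1
      · simpa using I2.comp_mem (biprod.snd : D1 ⊞ D2 ⟶ D2) (𝟙 B) he2.1
    · rintro D' e' ⟨g, h, hg, hh, rfl⟩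
      obtain ⟨f1, hf1⟩ := he1.2 g hg
      obtain ⟨f2, hf2⟩ := he2.2 h hh
      exact ⟨f1 ≫ biprod.inl + f2 ≫ biprod.inr, by
        simp [Preadditive.add_comp, hf1, hf2]⟩


end IdealApprox
end

section
/- Let (A;E) be an exact category. If J1 and J2 are monic preenveloping ideals of (A;E), then both J1 ∩ J2 and J1 + J2 are monic preenveloping ideals; explicitly, if inflations m1: B → J1 and m2: B → J2 are respectively a J1-preenvelope and a J2-preenvelope of B, then the pushout m1 ⨿_B m2 is an inflation that is a (J1 ∩ J2)-preenvelope of B, and the morphism (m1; m2): B → J1 ⊕ J2 is an inflation that is a (J1 + J2)-preenvelope of B. Dually, if I1 and I2 are epic precovering ideals, then so are I1 ∩ I2 and I1 + I2. -/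
open CategoryTheory CategoryTheory.Limits

universe w v u

namespace IdealApprox

variable {A : Type u} [Category.{v} A] [Preadditive A]

section AuxLemmas

lemma infl_comp_iso {E : ExactStructureData A} (hE : E.IsExact) {X Y Y' : A} {m : X ⟶ Y}
    (hm : E.IsInflation m) (e : Y ≅ Y') : E.IsInflation (m ≫ e.hom) := by
  obtain ⟨Z, p, hp⟩ := hm
  exact ⟨Z, e.inv ≫ p, hE.iso_closed (Iso.refl X) e (Iso.refl Z) (by simp) (by simp) hp⟩

lemma defl_iso_comp {E : ExactStructureData A} (hE : E.IsExact) {X Y Y' : A} {p : Y ⟶ X}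
    (hp : E.IsDeflation p) (e : Y' ≅ Y) : E.IsDeflation (e.hom ≫ p) := by
  obtain ⟨B, i, hi⟩ := hp
  exact ⟨B, i ≫ e.inv, hE.iso_closed (Iso.refl B) e.symm (Iso.refl X) (by simp) (by simp) hi⟩

lemma Ideal.mem_comp_right (J : Ideal A) {X Y Z : A} {f : X ⟶ Y} (k : Y ⟶ Z)
    (hf : J.mem f) : J.mem (f ≫ k) := by
  simpa using J.comp_mem (𝟙 X) k hf

lemma Ideal.mem_comp_left (J : Ideal A) {X Y Z : A} (h : X ⟶ Y) {g : Y ⟶ Z}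
    (hg : J.mem g) : J.mem (h ≫ g) := by
  simpa using J.comp_mem h (𝟙 Z) hg

variable [HasBinaryBiproducts A]

lemma inl_inflation {E : ExactStructureData A} (hE : E.IsExact) (B C : A) :
    E.IsInflation (biprod.inl : B ⟶ B ⊞ C) := by
  obtain ⟨W, i, hconf⟩ := hE.id_deflation C
  have hkc := hE.ker_coker hconf
  have hi : i = 0 := by simpa using hkc.w
  have eq : i ≫ (biprod.inr : C ⟶ B ⊞ C) = (0 : W ⟶ B) ≫ biprod.inl := by simp [hi]
  have colim : IsColimit (PushoutCocone.mk _ _ eq) := PushoutCocone.IsColimit.mk eq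
    (fun s => biprod.desc s.inr s.inl)
    (fun s => by simp)
    (fun s => by simp)
    (fun s m h1 h2 => by apply biprod.hom_ext' <;> simpa)
  have hsq : IsPushout i (0 : W ⟶ B) (biprod.inr : C ⟶ B ⊞ C) biprod.inl :=
    IsPushout.of_isColimit colim
  obtain ⟨W', g, m', hpo', hinfl⟩ := hE.pushout_inflation i (0 : W ⟶ B) ⟨C, 𝟙 C, hconf⟩
  have h := IsPushout.inr_isoIsPushout_hom (h := hpo') (h' := hsq)
  have := infl_comp_iso hE hinfl (hpo'.isoIsPushout _ _ hsq)
  rwa [h] at this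

lemma fst_deflation {E : ExactStructureData A} (hE : E.IsExact) (B C : A) :
    E.IsDeflation (biprod.fst : B ⊞ C ⟶ B) := by
  obtain ⟨Z, p, hconf⟩ := hE.id_inflation C
  have hkc := hE.ker_coker hconf
  have hp : p = 0 := by simpa using hkc.w
  have eq : (biprod.snd : B ⊞ C ⟶ C) ≫ p = biprod.fst ≫ (0 : B ⟶ Z) := by simp [hp]
  have lim : IsLimit (PullbackCone.mk _ _ eq) := PullbackCone.IsLimit.mk eq
    (fun s => biprod.lift s.snd s.fst)
    (fun s => by simp)
    (fun s => by simp)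
    (fun s m h1 h2 => by apply biprod.hom_ext <;> simpa)
  have hsq : IsPullback (biprod.snd : B ⊞ C ⟶ C) biprod.fst p (0 : B ⟶ Z) :=
    IsPullback.of_isLimit lim
  obtain ⟨W', g, p', hpb', hdefl⟩ := hE.pullback_deflation p (0 : B ⟶ Z) ⟨C, 𝟙 C, hconf⟩
  have h := IsPullback.isoIsPullback_hom_snd (h := hsq) (h' := hpb')
  have := defl_iso_comp hE hdefl (hsq.isoIsPullback _ _ hpb')
  rwa [h] at this

lemma map_id_inflation {E : ExactStructureData A} (hE : E.IsExact) {B C1 : A} (C2 : A)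
    {m1 : B ⟶ C1} (hm1 : E.IsInflation m1) :
    E.IsInflation (biprod.map m1 (𝟙 C2)) := by
  have eq : m1 ≫ (biprod.inl : C1 ⟶ C1 ⊞ C2)
      = (biprod.inl : B ⟶ B ⊞ C2) ≫ biprod.map m1 (𝟙 C2) := by simp
  have colim : IsColimit (PushoutCocone.mk _ _ eq) := PushoutCocone.IsColimit.mk eq
    (fun s => biprod.desc s.inl (biprod.inr ≫ s.inr))
    (fun s => by simp)
    (fun s => by
      apply biprod.hom_ext'
      · simpa using s.condition
      · simp)
    (fun s m h1 h2 => by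
      apply biprod.hom_ext'
      · simpa
      · have hh : (biprod.inr : C2 ⟶ C1 ⊞ C2)
            = (biprod.inr : C2 ⟶ B ⊞ C2) ≫ biprod.map m1 (𝟙 C2) := by simp
        rw [hh, Category.assoc, h2]
        simp)
  have hsq : IsPushout m1 (biprod.inl : B ⟶ B ⊞ C2)
      (biprod.inl : C1 ⟶ C1 ⊞ C2) (biprod.map m1 (𝟙 C2)) :=
    IsPushout.of_isColimit colim
  obtain ⟨W', g, m', hpo', hinfl⟩ :=
    hE.pushout_inflation m1 (biprod.inl : B ⟶ B ⊞ C2) hm1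
  have h := IsPushout.inr_isoIsPushout_hom (h := hpo') (h' := hsq)
  have := infl_comp_iso hE hinfl (hpo'.isoIsPushout _ _ hsq)
  rwa [h] at this

lemma map_id_deflation {E : ExactStructureData A} (hE : E.IsExact) {D1 B : A} (D2 : A)
    {e1 : D1 ⟶ B} (he1 : E.IsDeflation e1) :
    E.IsDeflation (biprod.map e1 (𝟙 D2)) := by
  have eq : (biprod.fst : D1 ⊞ D2 ⟶ D1) ≫ e1
      = biprod.map e1 (𝟙 D2) ≫ (biprod.fst : B ⊞ D2 ⟶ B) := by simp
  have lim : IsLimit (PullbackCone.mk _ _ eq) := PullbackCone.IsLimit.mk eq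
    (fun s => biprod.lift s.fst (s.snd ≫ biprod.snd))
    (fun s => by simp)
    (fun s => by
      apply biprod.hom_ext
      · simpa using s.condition
      · simp)
    (fun s m h1 h2 => by
      apply biprod.hom_ext
      · simpa
      · have hh : (biprod.snd : D1 ⊞ D2 ⟶ D2)
            = biprod.map e1 (𝟙 D2) ≫ (biprod.snd : B ⊞ D2 ⟶ D2) := by simp
        rw [hh, ← Category.assoc, h2]
        simp)
  have hsq : IsPullback (biprod.fst : D1 ⊞ D2 ⟶ D1) (biprod.map e1 (𝟙 D2))
      e1 (biprod.fst : B ⊞ D2 ⟶ B) :=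
    IsPullback.of_isLimit lim
  obtain ⟨W', g, p', hpb', hdefl⟩ :=
    hE.pullback_deflation e1 (biprod.fst : B ⊞ D2 ⟶ B) he1
  have h := IsPullback.isoIsPullback_hom_snd (h := hsq) (h' := hpb')
  have := defl_iso_comp hE hdefl (hsq.isoIsPullback _ _ hpb')
  rwa [h] at this

/-- The shear automorphism `(x, y) ↦ (x, f x + y)` of `X ⊞ Y`. -/
noncomputable def shearIso₁ {X Y : A} (f : X ⟶ Y) : X ⊞ Y ≅ X ⊞ Y where
  hom := biprod.lift biprod.fst (biprod.fst ≫ f + biprod.snd)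
  inv := biprod.lift biprod.fst (-(biprod.fst ≫ f) + biprod.snd)
  hom_inv_id := by
    apply biprod.hom_ext
    · simp
    · simp [Preadditive.comp_add, Preadditive.comp_neg]
  inv_hom_id := by
    apply biprod.hom_ext
    · simp
    · simp [Preadditive.comp_add, Preadditive.comp_neg]

/-- The shear automorphism `(x, y) ↦ (x + g y, y)` of `X ⊞ Y`. -/
noncomputable def shearIso₂ {X Y : A} (g : Y ⟶ X) : X ⊞ Y ≅ X ⊞ Y where
  hom := biprod.lift (biprod.fst + biprod.snd ≫ g) biprod.snd
  inv := biprod.lift (biprod.fst - biprod.snd ≫ g) biprod.snd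
  hom_inv_id := by
    apply biprod.hom_ext
    · simp [Preadditive.comp_add, Preadditive.comp_sub]
    · simp
  inv_hom_id := by
    apply biprod.hom_ext
    · simp [Preadditive.comp_add, Preadditive.comp_sub]
    · simp

lemma lift_inflation {E : ExactStructureData A} (hE : E.IsExact) {B C1 C2 : A}
    {m1 : B ⟶ C1} (m2 : B ⟶ C2) (hm1 : E.IsInflation m1) :
    E.IsInflation (biprod.lift m1 m2) := by
  have key : biprod.lift m1 m2
      = (biprod.inl ≫ (shearIso₁ m2).hom) ≫ biprod.map m1 (𝟙 C2) := by
    apply biprod.hom_ext <;> simp [shearIso₁]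
  rw [key]
  exact hE.comp_inflation (infl_comp_iso hE (inl_inflation hE B C2) _)
    (map_id_inflation hE C2 hm1)

lemma desc_deflation {E : ExactStructureData A} (hE : E.IsExact) {D1 D2 B : A}
    {e1 : D1 ⟶ B} (e2 : D2 ⟶ B) (he1 : E.IsDeflation e1) :
    E.IsDeflation (biprod.desc e1 e2) := by
  have key : biprod.desc e1 e2
      = biprod.map e1 (𝟙 D2) ≫ ((shearIso₂ e2).hom ≫ biprod.fst) := by
    apply biprod.hom_ext' <;> simp [shearIso₂]
  rw [key]
  exact hE.comp_deflation (map_id_deflation hE D2 he1)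
    (defl_iso_comp hE (fst_deflation hE B D2) _)

end AuxLemmas


variable [HasBinaryBiproducts A]

/-- Proposition: monic preenveloping ideals.  If `J1`, `J2` are monic
preenveloping ideals of an exact category, then so are `J1 ∩ J2` and `J1 + J2`;
explicitly, the pushout of two inflation-preenvelopes is an inflation which is a
`(J1 ∩ J2)`-preenvelope, and `(m1; m2) : B ⟶ J1 ⊕ J2` is an inflation which is a
`(J1 + J2)`-preenvelope.  Dually for epic precovering ideals. -/
theorem statement4 (E : ExactStructureData A) (hE : E.IsExact) (J1 J2 : Ideal A)
    (h1 : MonicPreenveloping E J1.mem) (h2 : MonicPreenveloping E J2.mem) :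
    MonicPreenveloping E (J1.inf J2).mem ∧
    MonicPreenveloping E (J1.sum J2).mem ∧
    (∀ ⦃B C1 C2 P : A⦄ (m1 : B ⟶ C1) (m2 : B ⟶ C2) (q1 : C1 ⟶ P) (q2 : C2 ⟶ P),
        E.IsInflation m1 → E.IsInflation m2 →
        IsPreenvelope J1.mem m1 → IsPreenvelope J2.mem m2 →
        IsPushout m1 m2 q1 q2 →
        E.IsInflation (m1 ≫ q1) ∧ IsPreenvelope (J1.inf J2).mem (m1 ≫ q1)) ∧
    (∀ ⦃B C1 C2 : A⦄ (m1 : B ⟶ C1) (m2 : B ⟶ C2),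
        E.IsInflation m1 → E.IsInflation m2 →
        IsPreenvelope J1.mem m1 → IsPreenvelope J2.mem m2 →
        E.IsInflation (biprod.lift m1 m2) ∧
          IsPreenvelope (J1.sum J2).mem (biprod.lift m1 m2)) ∧
    (∀ I1 I2 : Ideal A, EpicPrecovering E I1.mem → EpicPrecovering E I2.mem →
        EpicPrecovering E (I1.inf I2).mem ∧ EpicPrecovering E (I1.sum I2).mem) := by
  have key3 : ∀ ⦃B C1 C2 P : A⦄ (m1 : B ⟶ C1) (m2 : B ⟶ C2) (q1 : C1 ⟶ P) (q2 : C2 ⟶ P),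
      E.IsInflation m1 → E.IsInflation m2 →
      IsPreenvelope J1.mem m1 → IsPreenvelope J2.mem m2 →
      IsPushout m1 m2 q1 q2 →
      E.IsInflation (m1 ≫ q1) ∧ IsPreenvelope (J1.inf J2).mem (m1 ≫ q1) := by
    intro B C1 C2 P m1 m2 q1 q2 hin1 hin2 henv1 henv2 hpo
    obtain ⟨W, g, m', hpo', hinfl'⟩ := hE.pushout_inflation m2 m1 hin2
    have hq1 : E.IsInflation q1 := by
      have h := IsPushout.inr_isoIsPushout_hom (h := hpo') (h' := hpo.flip)
      have := infl_comp_iso hE hinfl' (hpo'.isoIsPushout _ _ hpo.flip)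
      rwa [h] at this
    refine ⟨hE.comp_inflation hin1 hq1, ⟨J1.mem_comp_right q1 henv1.1, ?_⟩, ?_⟩
    · rw [hpo.w]
      exact J2.mem_comp_right q2 henv2.1
    · intro C' j' hj'
      obtain ⟨f1, hf1⟩ := henv1.2 j' hj'.1
      obtain ⟨f2, hf2⟩ := henv2.2 j' hj'.2
      refine ⟨hpo.desc f1 f2 (by rw [hf1, hf2]), ?_⟩
      rw [Category.assoc, hpo.inl_desc, hf1]
  have key4 : ∀ ⦃B C1 C2 : A⦄ (m1 : B ⟶ C1) (m2 : B ⟶ C2),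
      E.IsInflation m1 → E.IsInflation m2 →
      IsPreenvelope J1.mem m1 → IsPreenvelope J2.mem m2 →
      E.IsInflation (biprod.lift m1 m2) ∧
        IsPreenvelope (J1.sum J2).mem (biprod.lift m1 m2) := by
    intro B C1 C2 m1 m2 hin1 hin2 henv1 henv2
    refine ⟨lift_inflation hE m2 hin1,
      ⟨m1 ≫ biprod.inl, m2 ≫ biprod.inr, J1.mem_comp_right _ henv1.1,
        J2.mem_comp_right _ henv2.1, by apply biprod.hom_ext <;> simp⟩, ?_⟩
    intro C' j' hj'
    obtain ⟨g, h, hg, hh, rfl⟩ := hj'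
    obtain ⟨f1, hf1⟩ := henv1.2 g hg
    obtain ⟨f2, hf2⟩ := henv2.2 h hh
    exact ⟨biprod.desc f1 f2, by rw [biprod.lift_desc, hf1, hf2]⟩
  refine ⟨?_, ?_, key3, key4, ?_⟩
  · intro B
    obtain ⟨C1, m1, hin1, henv1⟩ := h1 B
    obtain ⟨C2, m2, hin2, henv2⟩ := h2 B
    obtain ⟨P, q1, q2, hpo, _⟩ := hE.pushout_inflation m1 m2 hin1
    obtain ⟨ha, hb⟩ := key3 m1 m2 q1 q2 hin1 hin2 henv1 henv2 hpo
    exact ⟨P, m1 ≫ q1, ha, hb⟩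
  · intro B
    obtain ⟨C1, m1, hin1, henv1⟩ := h1 B
    obtain ⟨C2, m2, hin2, henv2⟩ := h2 B
    obtain ⟨ha, hb⟩ := key4 m1 m2 hin1 hin2 henv1 henv2
    exact ⟨C1 ⊞ C2, biprod.lift m1 m2, ha, hb⟩
  · intro I1 I2 hI1 hI2
    constructor
    · intro B
      obtain ⟨D1, e1, hd1, hcov1⟩ := hI1 B
      obtain ⟨D2, e2, hd2, hcov2⟩ := hI2 B
      obtain ⟨W, g, p', hpb, hp'⟩ := hE.pullback_deflation e1 e2 hd1
      refine ⟨W, p' ≫ e2, hE.comp_deflation hp' hd2,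
        ⟨?_, I2.mem_comp_left p' hcov2.1⟩, ?_⟩
      · rw [← hpb.w]
        exact I1.mem_comp_left g hcov1.1
      · intro D' e' he'
        obtain ⟨f1, hf1⟩ := hcov1.2 e' he'.1
        obtain ⟨f2, hf2⟩ := hcov2.2 e' he'.2
        refine ⟨hpb.lift f1 f2 (by rw [hf1, hf2]), ?_⟩
        rw [← Category.assoc, hpb.lift_snd, hf2]
    · intro B
      obtain ⟨D1, e1, hd1, hcov1⟩ := hI1 B
      obtain ⟨D2, e2, hd2, hcov2⟩ := hI2 B
      refine ⟨D1 ⊞ D2, biprod.desc e1 e2, desc_deflation hE e2 hd1,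
        ⟨biprod.fst ≫ e1, biprod.snd ≫ e2, I1.mem_comp_left _ hcov1.1,
          I2.mem_comp_left _ hcov2.1, by apply biprod.hom_ext' <;> simp⟩, ?_⟩
      intro D' e' he'
      obtain ⟨g, h, hg, hh, rfl⟩ := he'
      obtain ⟨f1, hf1⟩ := hcov1.2 g hg
      obtain ⟨f2, hf2⟩ := hcov2.2 h hh
      exact ⟨biprod.lift f1 f2, by rw [biprod.lift_desc, hf1, hf2]⟩


end IdealApprox
end

section
/- Let (A;E) be an exact category and let m1: B → C1 and m2: B → C2 be inflations with common domain B, occurring in conflations B → C1 → A1 and B → C2 → A2. Then the pushout m1 ⨿_B m2 : B → C1 ⨿_B C2 is the inflation occurring in the pushout of the direct-sum conflation B ⊕ B → C1 ⊕ C2 → A1 ⊕ A2 along the sum morphism s = (1_B, 1_B): B ⊕ B → B; that is, there is a morphism of conflations from B ⊕ B → C1 ⊕ C2 → A1 ⊕ A2 to B → C1 ⨿_B C2 → A1 ⊕ A2 whose left component is s, whose middle component is the canonical map (p1, p2), and whose right component is the identity of A1 ⊕ A2, and whose left-hand square is a pushout square. -/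
open CategoryTheory CategoryTheory.Limits

universe w v u

namespace IdealApprox

variable {A : Type u} [Category.{v} A] [Preadditive A]

/-! The direct sum of the two conflations is a conflation since
`m1 ⊕ m2 = (m1 ⊕ 1) ≫ (1 ⊕ m2)` is a composite of pushouts of inflations with cokernel
`p1 ⊕ p2`. Maps out of `C1 ⊕ C2` and out of `B` that agree on `B ⊕ B` are exactly cocones on the
span `(m1, m2)`, so the square along `s = (1, 1)` is a pushout. Pushing a conflation out along
any morphism yields a conflation, whose deflation is induced by the old one. -/

noncomputable def isColimitCokernelCoforkOfIsPushout {X Y Z W Q : A}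
    {f : X ⟶ Y} {g : X ⟶ Z} {h : Y ⟶ W} {k : Z ⟶ W} (hP : IsPushout f g h k)
    {p : Y ⟶ Q} {w : f ≫ p = 0} (hp : IsColimit (CokernelCofork.ofπ p w))
    {r : W ⟶ Q} (hr : h ≫ r = p) (hk : k ≫ r = 0) :
    IsColimit (CokernelCofork.ofπ r hk) :=
  have : Epi p := Cofork.IsColimit.epi hp
  have : Epi r := epi_of_epi_fac hr
  CokernelCofork.IsColimit.ofπ' r hk fun {_} t ht =>
    let l := CokernelCofork.IsColimit.desc' hp (h ≫ t)
      (by rw [← Category.assoc, hP.w, Category.assoc, ht, comp_zero])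
    ⟨l.1, hP.hom_ext (by simpa [← Category.assoc, hr] using l.2)
      (by rw [← Category.assoc, hk, zero_comp, ht])⟩

namespace ExactStructureData.IsExact

variable {E : ExactStructureData A}

lemma isInflation_comp_iso (hE : E.IsExact) {B C C' : A} {m : B ⟶ C}
    (hm : E.IsInflation m) (e : C ≅ C') : E.IsInflation (m ≫ e.hom) := by
  obtain ⟨X, p, hc⟩ := hm
  exact ⟨X, e.inv ≫ p, hE.iso_closed (Iso.refl B) e (Iso.refl X) (by simp) (by simp) hc⟩

lemma isInflation_of_isPushout (hE : E.IsExact) {X Y Z W : A} {m : X ⟶ Y} {f : X ⟶ Z}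
    {g : Y ⟶ W} {m' : Z ⟶ W} (h : IsPushout m f g m') (hm : E.IsInflation m) :
    E.IsInflation m' := by
  obtain ⟨W₀, g₀, m₀, h₀, hm₀⟩ := hE.pushout_inflation m f hm
  have := hE.isInflation_comp_iso hm₀ (h₀.isoIsPushout _ _ h)
  rwa [IsPushout.inr_isoIsPushout_hom] at this

lemma conf_of_isColimit (hE : E.IsExact) {B C X : A} {m : B ⟶ C} (hm : E.IsInflation m)
    {p : C ⟶ X} {w : m ≫ p = 0} (hp : IsColimit (CokernelCofork.ofπ p w)) : E.conf m p := by
  obtain ⟨X₀, p₀, hc⟩ := hm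
  obtain ⟨_, -, ⟨hp₀⟩⟩ := hE.ker_coker hc
  refine hE.iso_closed (Iso.refl B) (Iso.refl C) (hp₀.coconePointUniqueUpToIso hp)
    (by simp) ?_ hc
  simpa using hp₀.comp_coconePointUniqueUpToIso_hom hp WalkingParallelPair.one

lemma conf_of_isPushout (hE : E.IsExact) {B C X B' C' : A} {i : B ⟶ C} {p : C ⟶ X}
    (hc : E.conf i p) {f : B ⟶ B'} {g : C ⟶ C'} {i' : B' ⟶ C'} (hP : IsPushout i f g i')
    {r : C' ⟶ X} (hr : g ≫ r = p) (hi' : i' ≫ r = 0) : E.conf i' r :=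
  have hi : IsKernelCokernelPair i p := hE.ker_coker hc
  hE.conf_of_isColimit (hE.isInflation_of_isPushout hP ⟨X, p, hc⟩)
    (isColimitCokernelCoforkOfIsPushout hP hi.isCokernel.some hr hi')

end ExactStructureData.IsExact

variable [HasBinaryBiproducts A]

lemma isPushout_biprod_map_id_left {X Y : A} (m : X ⟶ Y) (Z : A) :
    IsPushout m biprod.inl biprod.inl (biprod.map m (𝟙 Z)) :=
  IsPushout.mk' (by simp)
    (fun _ _ _ h₁ h₂ => biprod.hom_ext' _ _ h₁ (by simpa using biprod.inr ≫= h₂))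
    (fun _ a b w => ⟨biprod.desc a (biprod.inr ≫ b), by simp, by ext <;> simp [w]⟩)

lemma isPushout_biprod_map_id_right {X Y : A} (m : X ⟶ Y) (Z : A) :
    IsPushout m biprod.inr biprod.inr (biprod.map (𝟙 Z) m) :=
  IsPushout.mk' (by simp)
    (fun _ _ _ h₁ h₂ => biprod.hom_ext' _ _ (by simpa using biprod.inl ≫= h₂) h₁)
    (fun _ a b w => ⟨biprod.desc (biprod.inl ≫ b) a, by simp, by ext <;> simp [w]⟩)

lemma isPushout_biprod_map_biprod_desc {B C1 C2 P : A} {m1 : B ⟶ C1} {m2 : B ⟶ C2}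
    {q1 : C1 ⟶ P} {q2 : C2 ⟶ P} (hpo : IsPushout m1 m2 q1 q2) :
    IsPushout (biprod.map m1 m2) (biprod.desc (𝟙 B) (𝟙 B)) (biprod.desc q1 q2) (m1 ≫ q1) :=
  IsPushout.mk' (by ext <;> simp [hpo.w])
    (fun _ _ _ h₁ _ => hpo.hom_ext (by simpa using biprod.inl ≫= h₁)
      (by simpa using biprod.inr ≫= h₁))
    (fun _ a b w => by
      have e1 : m1 ≫ biprod.inl ≫ a = b := by simpa using biprod.inl ≫= w
      have e2 : m2 ≫ biprod.inr ≫ a = b := by simpa using biprod.inr ≫= w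
      exact ⟨hpo.desc (biprod.inl ≫ a) (biprod.inr ≫ a) (e1.trans e2.symm),
        by ext <;> simp, by simp [e1]⟩)

noncomputable def isColimitCokernelCoforkBiprodMap {B1 B2 C1 C2 X1 X2 : A}
    {m1 : B1 ⟶ C1} {p1 : C1 ⟶ X1} {m2 : B2 ⟶ C2} {p2 : C2 ⟶ X2}
    {w1 : m1 ≫ p1 = 0} {w2 : m2 ≫ p2 = 0}
    (h1 : IsColimit (CokernelCofork.ofπ p1 w1)) (h2 : IsColimit (CokernelCofork.ofπ p2 w2))
    (w : biprod.map m1 m2 ≫ biprod.map p1 p2 = 0) :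
    IsColimit (CokernelCofork.ofπ (biprod.map p1 p2) w) :=
  have : Epi p1 := Cofork.IsColimit.epi h1
  have : Epi p2 := Cofork.IsColimit.epi h2
  CokernelCofork.IsColimit.ofπ' _ w fun {_} t ht => by
    obtain ⟨l1, hl1⟩ := CokernelCofork.IsColimit.desc' h1 (biprod.inl ≫ t)
      (by simpa using biprod.inl ≫= ht)
    obtain ⟨l2, hl2⟩ := CokernelCofork.IsColimit.desc' h2 (biprod.inr ≫ t)
      (by simpa using biprod.inr ≫= ht)
    simp only [Cofork.π_ofπ] at hl1 hl2
    exact ⟨biprod.desc l1 l2, by ext <;> simp [hl1, hl2]⟩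

namespace ExactStructureData.IsExact

variable {E : ExactStructureData A}

lemma conf_biprod_map (hE : E.IsExact)
    {B1 B2 C1 C2 X1 X2 : A} {m1 : B1 ⟶ C1} {p1 : C1 ⟶ X1} {m2 : B2 ⟶ C2} {p2 : C2 ⟶ X2}
    (h1 : E.conf m1 p1) (h2 : E.conf m2 p2) : E.conf (biprod.map m1 m2) (biprod.map p1 p2) := by
  obtain ⟨w1, -, ⟨hp1⟩⟩ := hE.ker_coker h1
  obtain ⟨w2, -, ⟨hp2⟩⟩ := hE.ker_coker h2
  have hm : E.IsInflation (biprod.map m1 m2) := by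
    have hm1 := hE.isInflation_of_isPushout (isPushout_biprod_map_id_left m1 B2) ⟨_, _, h1⟩
    have hm2 := hE.isInflation_of_isPushout (isPushout_biprod_map_id_right m2 C1) ⟨_, _, h2⟩
    have hfac : biprod.map m1 (𝟙 B2) ≫ biprod.map (𝟙 C1) m2 = biprod.map m1 m2 := by
      ext <;> simp
    simpa only [hfac] using hE.comp_inflation hm1 hm2
  have w : biprod.map m1 m2 ≫ biprod.map p1 p2 = 0 := by ext <;> simp [w1, w2]
  exact hE.conf_of_isColimit hm (isColimitCokernelCoforkBiprodMap hp1 hp2 w)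

end ExactStructureData.IsExact

/-- Lemma: cokernel of a pushout of inflations.  Given conflations
`B ⟶ C1 ⟶ A1` and `B ⟶ C2 ⟶ A2` and a pushout square of the inflations `m1`, `m2`,
the pushout `m1 ⨿_B m2 = m1 ≫ q1 : B ⟶ C1 ⨿_B C2` is the inflation occurring in the
pushout of the direct-sum conflation `B ⊕ B ⟶ C1 ⊕ C2 ⟶ A1 ⊕ A2` along the sum
morphism `s = (1_B, 1_B)`: there is a morphism of conflations with left component `s`,
middle component `(q1, q2)`, right component the identity of `A1 ⊕ A2`, whose left-hand
square is a pushout square. -/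
theorem statement5 (E : ExactStructureData A) (hE : E.IsExact)
    {B C1 C2 A1 A2 P : A} (m1 : B ⟶ C1) (p1 : C1 ⟶ A1) (m2 : B ⟶ C2) (p2 : C2 ⟶ A2)
    (h1 : E.conf m1 p1) (h2 : E.conf m2 p2)
    (q1 : C1 ⟶ P) (q2 : C2 ⟶ P) (hpo : IsPushout m1 m2 q1 q2) :
    E.conf (biprod.map m1 m2) (biprod.map p1 p2) ∧
    ∃ r : P ⟶ A1 ⊞ A2,
      E.conf (m1 ≫ q1) r ∧
      biprod.map m1 m2 ≫ biprod.desc q1 q2 = biprod.desc (𝟙 B) (𝟙 B) ≫ (m1 ≫ q1) ∧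
      biprod.map p1 p2 = biprod.desc q1 q2 ≫ r ∧
      IsPushout (biprod.map m1 m2) (biprod.desc (𝟙 B) (𝟙 B))
        (biprod.desc q1 q2) (m1 ≫ q1) := by
  have hsum := hE.conf_biprod_map h1 h2
  have hP := isPushout_biprod_map_biprod_desc hpo
  have w : biprod.map m1 m2 ≫ biprod.map p1 p2 = biprod.desc (𝟙 B) (𝟙 B) ≫ 0 := by
    rw [(hE.ker_coker hsum).w, comp_zero]
  refine ⟨hsum, hP.desc _ _ w, ?_, hP.w, (hP.inl_desc _ _ w).symm, hP⟩
  exact hE.conf_of_isPushout hsum hP (hP.inl_desc _ _ w) (hP.inr_desc _ _ w)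

end IdealApprox
end

section
/- Let (A;E) be an exact category. The exact functor A → Arr(A), B ↦ 1_B, induces for all objects A and B of A an isomorphism of Ext-groups Ext_{(A;E)}(A, B) ≅ Ext_{(Arr(A); Arr(E))}(1_A, 1_B); in particular, every conflation of arrows of the form 1_B → c → 1_A has middle component c an isomorphism in A and is isomorphic to the image of a conflation of (A;E) under this functor. -/
open CategoryTheory CategoryTheory.Limits

universe w v u

namespace IdealApprox

variable {A : Type u} [Category.{v} A] [Preadditive A]

/-- The exact functor `A → Arr(A)`, `B ↦ 1_B`, induces an isomorphism
`Ext_{(A;E)}(X, B) ≅ Ext_{(Arr A; Arr E)}(1_X, 1_B)`.  Concretely (encoding conflations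
of arrows componentwise): every conflation of arrows `1_B ⟶ c ⟶ 1_X` has middle
component `c` an isomorphism of `A` and is equivalent (isomorphic fixing the ends) to
the image `1_B ⟶ 1_{C0} ⟶ 1_X` of a conflation of `(A;E)`; moreover the induced map is
injective on equivalence classes: two conflations of `(A;E)` whose images are
equivalent are themselves equivalent. -/
theorem statement6 (E : ExactStructureData A) (hE : E.IsExact) (X B : A) :
    (∀ ⦃C0 C1 : A⦄ (c : C0 ⟶ C1) (i0 : B ⟶ C0) (p0 : C0 ⟶ X) (i1 : B ⟶ C1) (p1 : C1 ⟶ X),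
        IsArrowConf E (𝟙 B) c (𝟙 X) i0 p0 i1 p1 →
        IsIso c ∧ E.conf i0 p0 ∧
          ArrowConfEquiv c i0 p0 i1 p1 (𝟙 C0) i0 p0 i0 p0) ∧
    (∀ ⦃C C' : A⦄ (i : B ⟶ C) (p : C ⟶ X) (i' : B ⟶ C') (p' : C' ⟶ X),
        E.conf i p → E.conf i' p' →
        ArrowConfEquiv (𝟙 C) i p i p (𝟙 C') i' p' i' p' →
        ∃ e : C ≅ C', i ≫ e.hom = i' ∧ e.hom ≫ p' = p) := by
  constructor
  · rintro C0 C1 c i0 p0 i1 p1 ⟨hc0, hc1, hsq1, hsq2⟩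
    rw [Category.id_comp] at hsq1
    rw [Category.comp_id] at hsq2
    obtain ⟨w0, ⟨hk0⟩, ⟨hq0⟩⟩ := hE.ker_coker hc0
    obtain ⟨w1, ⟨hk1⟩, ⟨hq1⟩⟩ := hE.ker_coker hc1
    obtain ⟨W, P, G, hPB, hGdef⟩ := hE.pullback_deflation p0 p1 ⟨B, i0, hc0⟩
    obtain ⟨K, j, hconfG⟩ := hGdef
    obtain ⟨wj, ⟨hkj⟩, ⟨hqj⟩⟩ := hE.ker_coker hconfG
    -- cancellation helpers
    have hmono1 : ∀ {T : A} (z z' : T ⟶ B), z ≫ i1 = z' ≫ i1 → z = z' := by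
      intro T z z' h
      exact Fork.IsLimit.hom_ext hk1 (by simpa using h)
    have hepi0 : ∀ {T : A} (y y' : X ⟶ T), p0 ≫ y = p0 ≫ y' → y = y' := by
      intro T y y' h
      exact Cofork.IsColimit.hom_ext hq0 (by simpa using h)
    -- the three canonical maps into the pullback W
    obtain ⟨t, ht1, ht2⟩ :
        ∃ t : C0 ⟶ W, t ≫ P = 𝟙 C0 ∧ t ≫ G = c :=
      ⟨hPB.lift (𝟙 C0) c (by simp [hsq2]), hPB.lift_fst _ _ _, hPB.lift_snd _ _ _⟩
    obtain ⟨k, hka, hkb⟩ :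
        ∃ k : B ⟶ W, k ≫ P = 0 ∧ k ≫ G = i1 :=
      ⟨hPB.lift 0 i1 (by simp [w1]), hPB.lift_fst _ _ _, hPB.lift_snd _ _ _⟩
    obtain ⟨k', hk'a, hk'b⟩ :
        ∃ k' : B ⟶ W, k' ≫ P = i0 ∧ k' ≫ G = 0 :=
      ⟨hPB.lift i0 0 (by simp [w0]), hPB.lift_fst _ _ _, hPB.lift_snd _ _ _⟩
    -- `𝟙 W - P ≫ t` kills `P`, hence factors through the kernel `k` of `P`
    have heP : (𝟙 W - P ≫ t) ≫ P = 0 := by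
      rw [Preadditive.sub_comp, Category.id_comp, Category.assoc, ht1, Category.comp_id,
        sub_self]
    have hEG : ((𝟙 W - P ≫ t) ≫ G) ≫ p1 = 0 := by
      rw [Category.assoc, ← hPB.w, ← Category.assoc, heP, zero_comp]
    obtain ⟨q, hq⟩ := KernelFork.IsLimit.lift' hk1 ((𝟙 W - P ≫ t) ≫ G) hEG
    simp only [Fork.ι_ofι] at hq
    have he : 𝟙 W - P ≫ t = q ≫ k := by
      refine hPB.hom_ext ?_ ?_
      · rw [heP, Category.assoc, hka, comp_zero]
      · rw [Category.assoc, hkb]; exact hq.symm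
    -- `t ≫ q = 0`
    have htq : t ≫ q = 0 := by
      refine hmono1 _ _ ?_
      have ht0 : t ≫ (𝟙 W - P ≫ t) = 0 := by
        rw [Preadditive.comp_sub, Category.comp_id, ← Category.assoc, ht1,
          Category.id_comp, sub_self]
      rw [Category.assoc, hq, ← Category.assoc, ht0, zero_comp, zero_comp]
    -- `k' ≫ q = -𝟙 B`
    have hk'q : k' ≫ q = -(𝟙 B) := by
      refine hmono1 _ _ ?_
      have hk'e : k' ≫ (𝟙 W - P ≫ t) = k' - i0 ≫ t := by
        rw [Preadditive.comp_sub, Category.comp_id, ← Category.assoc, hk'a]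
      rw [Category.assoc, hq, ← Category.assoc, hk'e, Preadditive.sub_comp, hk'b,
        Category.assoc, ht2, hsq1, zero_sub, Preadditive.neg_comp, Category.id_comp]
    -- the kernel `j` of `G` factors through `k'`
    have hjP : (j ≫ P) ≫ p0 = 0 := by
      rw [Category.assoc, hPB.w, ← Category.assoc, wj, zero_comp]
    obtain ⟨s, hs⟩ := KernelFork.IsLimit.lift' hk0 (j ≫ P) hjP
    simp only [Fork.ι_ofι] at hs
    have hj : j = s ≫ k' := by
      refine hPB.hom_ext ?_ ?_
      · rw [Category.assoc, hk'a, hs]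
      · rw [Category.assoc, hk'b, comp_zero, wj]
    -- descend `P + q ≫ i0` along the deflation `G`
    have hk'm : k' ≫ (P + q ≫ i0) = 0 := by
      rw [Preadditive.comp_add, hk'a, ← Category.assoc, hk'q, Preadditive.neg_comp,
        Category.id_comp, add_neg_cancel]
    have hjm : j ≫ (P + q ≫ i0) = 0 := by
      rw [hj, Category.assoc, hk'm, comp_zero]
    obtain ⟨d, hd⟩ := CokernelCofork.IsColimit.desc' hqj (P + q ≫ i0) hjm
    change C1 ⟶ C0 at d
    simp only [Cofork.π_ofπ] at hd
    -- `d` is a two-sided inverse of `c`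
    have hcd : c ≫ d = 𝟙 C0 := by
      rw [← ht2, Category.assoc, hd, Preadditive.comp_add, ht1, ← Category.assoc, htq,
        zero_comp, add_zero]
    have hdc : d ≫ c = 𝟙 C1 := by
      have hcx : c ≫ (d ≫ c - 𝟙 C1) = 0 := by
        rw [Preadditive.comp_sub, ← Category.assoc, hcd, Category.id_comp,
          Category.comp_id, sub_self]
      have hix : i1 ≫ (d ≫ c - 𝟙 C1) = 0 := by
        rw [← hsq1, Category.assoc, hcx, comp_zero]
      obtain ⟨y, hy⟩ := CokernelCofork.IsColimit.desc' hq1 (d ≫ c - 𝟙 C1) hix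
      change X ⟶ C1 at y
      simp only [Cofork.π_ofπ] at hy
      have hy0 : y = 0 := by
        refine hepi0 _ _ ?_
        rw [hsq2, Category.assoc, hy, hcx, comp_zero]
      have : d ≫ c - 𝟙 C1 = 0 := by rw [← hy, hy0, comp_zero]
      exact sub_eq_zero.mp this
    refine ⟨⟨⟨d, hcd, hdc⟩⟩, hc0, Iso.refl C0, ⟨d, c, hdc, hcd⟩, ?_, ?_, ?_, ?_, ?_⟩
    · simpa using hcd
    · simp
    · simp
    · show i1 ≫ d = i0
      rw [← hsq1, Category.assoc, hcd, Category.comp_id]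
    · show d ≫ p0 = p1
      rw [hsq2, ← Category.assoc, hdc]
      simp
  · rintro C C' i p i' p' hc hc' ⟨e0, e1, _, h1, h2, _, _⟩
    exact ⟨e0, h1, h2⟩

end IdealApprox
end
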